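/- arXiv:2106.09101 — 5 statements merged into one kernel-verified Lean document; each statement's English description precedes it below -/
import Mathlib

section
/- Let X be a Polish space and N ≥ 1. (a) A probability measure λ ∈ 𝒫(X) belongs to 𝒫_{1/N}(X) if and only if for every m ∈ {0,1,…,N−1} and every Borel set A ⊆ X one has λ(A)² − ((2m+1)/N)·λ(A) + m(m+1)/N² ≥ 0, i.e. (λ⊗λ)(A×A) − ((2m+1)/N)·(id^{⊗2}_#λ)(A×A) ≥ −m(m+1)/N². (b) The set 𝒫_{1/N}(X) is closed under narrow convergence. -/
open MeasureTheory Filter Topology ENNReal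

noncomputable section

namespace FiniteDeFinetti

variable {X : Type*}

/-- The symmetrization `S_N γ := (1/N!) ∑_{σ ∈ S_N} γ^σ` of a measure on `X^N`,
where `γ^σ` is the pushforward of `γ` under the coordinate permutation induced by `σ`. -/
def symmetrize [MeasurableSpace X] (N : ℕ) (γ : Measure (Fin N → X)) :
    Measure (Fin N → X) :=
  (N.factorial : ℝ≥0∞)⁻¹ • ∑ σ : Equiv.Perm (Fin N), γ.map (fun x i => x (σ i))

/-- The `k`-point marginal `M_k γ` of a measure on `X^N` (projection on the first `k` coords). -/
def marginal [MeasurableSpace X] {k N : ℕ} (h : k ≤ N) (γ : Measure (Fin N → X)) :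
    Measure (Fin k → X) :=
  γ.map (fun x i => x (Fin.castLE h i))

/-- `𝒫_sym(X^N)`: symmetric probability measures on `X^N`. -/
def PsymSet [MeasurableSpace X] (N : ℕ) : Set (Measure (Fin N → X)) :=
  {γ | IsProbabilityMeasure γ ∧ γ = symmetrize N γ}

/-- `𝒫_{N-rep}(X^k)`: the `N`-representable `k`-plans. -/
def NRep [MeasurableSpace X] {k N : ℕ} (h : k ≤ N) : Set (Measure (Fin k → X)) :=
  {μ | ∃ γ : Measure (Fin N → X), γ ∈ PsymSet N ∧ μ = marginal h γ}

/-- Narrow (weak) convergence of a sequence of measures: convergence of integrals of all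
bounded continuous functions. -/
def NarrowTendsto {Y : Type*} [MeasurableSpace Y] [TopologicalSpace Y]
    (μs : ℕ → Measure Y) (μ : Measure Y) : Prop :=
  ∀ φ : BoundedContinuousFunction Y ℝ,
    Tendsto (fun n => ∫ y, φ y ∂(μs n)) atTop (𝓝 (∫ y, φ y ∂μ))

/-- The empirical measure `(1/N) ∑ δ_{x_i}`. -/
def empirical [MeasurableSpace X] (N : ℕ) (x : Fin N → X) : Measure X :=
  (N : ℝ≥0∞)⁻¹ • ∑ i, Measure.dirac (x i)

/-- Extreme point of a convex set of measures. -/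
def IsExtremePt {Y : Type*} [MeasurableSpace Y] (C : Set (Measure Y)) (μ : Measure Y) : Prop :=
  μ ∈ C ∧ ∀ μ1 ∈ C, ∀ μ2 ∈ C, ∀ t : ℝ≥0∞, 0 < t → t < 1 →
    μ = t • μ1 + (1 - t) • μ2 → μ1 = μ ∧ μ2 = μ

/-- The set `E_{N,k}` of marginals of symmetrized Dirac measures. -/
def ENk [MeasurableSpace X] {k N : ℕ} (h : k ≤ N) : Set (Measure (Fin k → X)) :=
  {μ | ∃ x : Fin N → X, μ = marginal h (symmetrize N (Measure.dirac x))}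

/-- Borel σ-algebra on the space of probability measures with its narrow topology. -/
instance instMSPM {Y : Type*} [MeasurableSpace Y] [TopologicalSpace Y]
    [OpensMeasurableSpace Y] : MeasurableSpace (ProbabilityMeasure Y) := borel _

lemma empirical_isProbabilityMeasure [MeasurableSpace X] {N : ℕ} (hN : 0 < N) (x : Fin N → X) :
    IsProbabilityMeasure (empirical N x) := by
  constructor
  simp only [empirical, Measure.smul_apply, smul_eq_mul]
  rw [Measure.finset_sum_apply]
  simp only [measure_univ, Finset.sum_const, Finset.card_univ, Fintype.card_fin, nsmul_eq_mul,
    mul_one]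
  exact ENNReal.inv_mul_cancel (by exact_mod_cast hN.ne') (natCast_ne_top N)

/-- The empirical-measure map `Λ : X^N → 𝒫(X)`. -/
def empPM [MeasurableSpace X] {N : ℕ} (hN : 0 < N) (x : Fin N → X) : ProbabilityMeasure X :=
  ⟨empirical N x, empirical_isProbabilityMeasure hN x⟩

/-- The set `𝒫_{1/N}(X)` of `1/N`-quantized probability measures (as probability measures). -/
def QuantizedPM [MeasurableSpace X] (N : ℕ) : Set (ProbabilityMeasure X) :=
  {lam | ∃ x : Fin N → X, (lam : Measure X) = empirical N x}

open Classical in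
/-- The extremal `N`-representable `k`-plan `F_{N,k}(λ)` associated with a `1/N`-quantized
probability measure `λ = (1/N) ∑ δ_{x_i}`, namely `M_k S_N δ_{(x_1,…,x_N)}` (this does not
depend on the chosen enumeration of the atoms of `λ` counted with multiplicity); junk value
`λ^{⊗k}` for non-quantized `λ`. -/
def FNk [MeasurableSpace X] {k N : ℕ} (h : k ≤ N) (lam : ProbabilityMeasure X) :
    Measure (Fin k → X) :=
  if hx : ∃ x : Fin N → X, (lam : Measure X) = empirical N x then
    marginal h (symmetrize N (Measure.dirac (Classical.choose hx)))
  else Measure.pi fun _ => (lam : Measure X)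


/-- The set of `1/N`-quantized probability measures, as a set of measures. -/
def Quantized [MeasurableSpace X] (N : ℕ) : Set (Measure X) :=
  {lam | ∃ x : Fin N → X, lam = empirical N x}

end FiniteDeFinetti

/-!
A probability measure is `1/N`-quantized iff all its values lie in `(1/N)ℕ`. Indeed, every
closed ball around a point `x` of the support of such a measure has mass `≥ 1/N`, hence so has
`{x}`; subtracting `δ_x / N` keeps the values in `(1/N)ℕ`, so the atoms can be peeled off one
at a time. The quadratic factors as `(t - m/N) (t - (m+1)/N)`, so condition (a) says that `λ(A)`
avoids every gap `(m/N, (m+1)/N)`. This gap property survives narrow limits: if `λ(C) > m/N`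
for a closed `C`, the portmanteau inequality on the open thickening of `C` forces
`λₙ(thickening) ≥ (m+1)/N` eventually, the one on the closed thickening passes this to `λ`,
and letting the radius go to `0` gives `λ(C) ≥ (m+1)/N`. Inner regularity extends it to all
Borel sets.
-/

open Set Metric

namespace ENNReal

theorem natCast_div_notMem_Ioo (j m N : ℕ) :
    (j : ℝ≥0∞) / N ∉ Ioo ((m : ℝ≥0∞) / N) ((m + 1) / N) := by
  rintro ⟨hmj, hjm⟩
  have hm : m < j := by
    by_contra! h
    exact hmj.not_ge (ENNReal.div_le_div_right (by exact_mod_cast h) _)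
  have : ((m + 1 : ℕ) : ℝ≥0∞) / N ≤ j / N := ENNReal.div_le_div_right (by exact_mod_cast hm) _
  push_cast at this
  exact hjm.not_ge this

theorem exists_eq_natCast_div_of_forall_notMem_Ioo {t : ℝ≥0∞} {N k : ℕ} (hk : t ≤ k / N)
    (h : ∀ m < k, t ∉ Ioo ((m : ℝ≥0∞) / N) ((m + 1) / N)) : ∃ j : ℕ, t = j / N := by
  induction k with
  | zero => exact ⟨0, by simpa using hk⟩
  | succ k ih =>
    by_cases hle : t ≤ k / N
    · exact ih hle fun m hm => h m (by omega)
    · refine ⟨k + 1, le_antisymm hk ?_⟩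
      push_cast at hk ⊢
      by_contra hlt
      exact h k k.lt_succ_self ⟨not_le.1 hle, not_le.1 hlt⟩

theorem notMem_Ioo_natCast_div_iff_toReal {t : ℝ≥0∞} (ht : t ≠ ∞) {m N : ℕ} (hN : N ≠ 0) :
    t ∉ Ioo ((m : ℝ≥0∞) / N) ((m + 1) / N) ↔ t.toReal ∉ Ioo ((m : ℝ) / N) ((m + 1) / N) := by
  have hfin : ∀ a : ℕ, (a : ℝ≥0∞) / N ≠ ∞ := fun a =>
    ENNReal.div_ne_top (natCast_ne_top a) (by simpa using hN)
  have hfin' := hfin (m + 1)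
  push_cast at hfin'
  simp [← ENNReal.toReal_lt_toReal (hfin m) ht, ← ENNReal.toReal_lt_toReal ht hfin',
    ENNReal.toReal_div, ENNReal.toReal_add]

theorem inv_natCast_le_natCast_div {j N : ℕ} (hj : (j : ℝ≥0∞) / N ≠ 0) :
    (N : ℝ≥0∞)⁻¹ ≤ j / N := by
  have : 1 ≤ j := Nat.one_le_iff_ne_zero.2 (by rintro rfl; simp at hj)
  simpa using ENNReal.div_le_div_right (Nat.one_le_cast.2 this) (N : ℝ≥0∞)

theorem natCast_div_sub_inv_natCast {j N : ℕ} (hN : N ≠ 0) (hj : (N : ℝ≥0∞)⁻¹ ≤ j / N) :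
    (j : ℝ≥0∞) / N - (N : ℝ≥0∞)⁻¹ = ((j - 1 : ℕ) : ℝ≥0∞) / N := by
  obtain _ | j := j
  · simp at hj
  · rw [Nat.add_sub_cancel, Nat.cast_succ, ENNReal.add_div, one_div,
      ENNReal.add_sub_cancel_right (by simpa using hN)]

end ENNReal

theorem quadratic_nonneg_iff_notMem_Ioo {N : ℕ} (hN : N ≠ 0) (m : ℕ) (t : ℝ) :
    0 ≤ t ^ 2 - ((2 * m + 1 : ℝ) / N) * t + (m * (m + 1) : ℝ) / N ^ 2 ↔
      t ∉ Ioo ((m : ℝ) / N) ((m + 1) / N) := by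
  have hfactor : t ^ 2 - ((2 * m + 1 : ℝ) / N) * t + (m * (m + 1) : ℝ) / N ^ 2
      = (t - m / N) * (t - (m + 1) / N) := by
    field_simp
    ring
  have hmN : (m : ℝ) / N ≤ (m + 1) / N := by gcongr; linarith
  rw [hfactor, mem_Ioo]
  constructor
  · rintro h ⟨h1, h2⟩
    nlinarith
  · intro h
    by_cases h1 : (m : ℝ) / N < t
    · nlinarith [not_lt.1 fun h2 => h ⟨h1, h2⟩]
    · nlinarith

namespace MeasureTheory

variable {X : Type*} [MeasurableSpace X] [TopologicalSpace X]

theorem exists_le_measure_singleton [TopologicalSpace.MetrizableSpace X]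
    [SecondCountableTopology X] [OpensMeasurableSpace X] {μ : Measure X} [IsFiniteMeasure μ]
    (hμ : μ ≠ 0) {c : ℝ≥0∞} (hc : ∀ A, MeasurableSet A → μ A ≠ 0 → c ≤ μ A) :
    ∃ x, c ≤ μ {x} := by
  let := TopologicalSpace.metrizableSpaceMetric X
  obtain ⟨x, hx⟩ := μ.nonempty_support hμ
  refine ⟨x, ge_of_tendsto ((tendsto_measure_cthickening_of_isClosed
    ⟨1, one_pos, measure_ne_top μ _⟩ isClosed_singleton).mono_left
      (nhdsWithin_le_nhds (s := Ioi 0))) ?_⟩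
  filter_upwards [self_mem_nhdsWithin] with r (hr : 0 < r)
  refine hc _ isClosed_cthickening.measurableSet ((Measure.mem_support_iff_forall x).1 hx _ ?_).ne'
  simpa using cthickening_mem_nhdsSet {x} hr

theorem exists_eq_inv_smul_sum_dirac [TopologicalSpace.MetrizableSpace X]
    [SecondCountableTopology X] [OpensMeasurableSpace X] {N : ℕ} (hN : N ≠ 0) {k : ℕ}
    {μ : Measure X} (hμ : ∀ A, MeasurableSet A → ∃ j : ℕ, μ A = j / N) (hk : μ univ = k / N) :
    ∃ x : Fin k → X, μ = (N : ℝ≥0∞)⁻¹ • ∑ i, Measure.dirac (x i) := by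
  induction k generalizing μ with
  | zero => exact ⟨Fin.elim0, by simpa using hk⟩
  | succ k ih =>
    classical
    have : IsFiniteMeasure μ := ⟨hk ▸ ENNReal.div_lt_top (natCast_ne_top _) (by simpa using hN)⟩
    have hμ0 : μ ≠ 0 := by
      rintro rfl
      simp [eq_comm (a := (0 : ℝ≥0∞)), ENNReal.div_eq_zero_iff] at hk
    obtain ⟨x, hx⟩ := exists_le_measure_singleton hμ0 (c := (N : ℝ≥0∞)⁻¹) fun A hA hA0 => by
      obtain ⟨j, hj⟩ := hμ A hA
      exact hj ▸ ENNReal.inv_natCast_le_natCast_div (hj ▸ hA0)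
    set ν : Measure X := (N : ℝ≥0∞)⁻¹ • Measure.dirac x
    have : IsFiniteMeasure ν := ⟨by simpa [ν, Nat.pos_iff_ne_zero] using hN⟩
    have hν_apply : ∀ A, MeasurableSet A → ν A = if x ∈ A then (N : ℝ≥0∞)⁻¹ else 0 := by
      intro A hA
      by_cases hxA : x ∈ A <;> simp [ν, hA, hxA]
    have hνμ : ν ≤ μ := Measure.le_iff.2 fun A hA => by
      rw [hν_apply A hA]
      split_ifs with hxA
      · exact hx.trans (measure_mono (singleton_subset_iff.2 hxA))
      · exact zero_le
    have hsub : ∀ A, MeasurableSet A → ∃ j : ℕ, (μ - ν) A = j / N := by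
      intro A hA
      obtain ⟨j, hj⟩ := hμ A hA
      rw [Measure.sub_apply hA hνμ, hν_apply A hA, hj]
      split_ifs with hxA
      · refine ⟨j - 1, ENNReal.natCast_div_sub_inv_natCast hN ?_⟩
        exact hj ▸ hx.trans (measure_mono (singleton_subset_iff.2 hxA))
      · exact ⟨j, tsub_zero _⟩
    obtain ⟨y, hy⟩ := ih hsub (by
      rw [Measure.sub_apply MeasurableSet.univ hνμ, hν_apply _ MeasurableSet.univ,
        if_pos (mem_univ x), hk,
        ENNReal.natCast_div_sub_inv_natCast hN (hk ▸ hx.trans (measure_mono (subset_univ _)))]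
      rfl)
    refine ⟨Fin.cons x y, ?_⟩
    rw [← Measure.sub_add_cancel_of_le hνμ, hy, Fin.sum_univ_succ, smul_add, add_comm]
    simp [ν]

namespace ProbabilityMeasure

variable [TopologicalSpace.PseudoMetrizableSpace X] {ι : Type*} {L : Filter ι}
  {μs : ι → ProbabilityMeasure X} {μ : ProbabilityMeasure X} {a b : ℝ≥0∞}

theorem le_measure_isClosed_of_tendsto [OpensMeasurableSpace X] [L.NeBot]
    (hlim : Tendsto μs L (𝓝 μ)) (hgap : ∀ i A, MeasurableSet A → (μs i : Measure X) A ∉ Ioo a b)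
    {C : Set X} (hC : IsClosed C) (ha : a < (μ : Measure X) C) : b ≤ (μ : Measure X) C := by
  let := TopologicalSpace.pseudoMetrizableSpacePseudoMetric X
  refine ge_of_tendsto ((tendsto_measure_cthickening_of_isClosed
    ⟨1, one_pos, measure_ne_top _ _⟩ hC).mono_left (nhdsWithin_le_nhds (s := Ioi 0))) ?_
  filter_upwards [self_mem_nhdsWithin] with r (hr : 0 < r)
  have hliminf : a < L.liminf fun i => (μs i : Measure X) (thickening r C) :=
    ha.trans_le <| (measure_mono (self_subset_thickening hr C)).trans
      (le_liminf_measure_open_of_tendsto hlim isOpen_thickening)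
  have hev : ∀ᶠ i in L, b ≤ (μs i : Measure X) (cthickening r C) :=
    (eventually_lt_of_lt_liminf hliminf).mono fun i hi =>
      (not_lt.1 fun hb => hgap i _ isOpen_thickening.measurableSet ⟨hi, hb⟩).trans
        (measure_mono (thickening_subset_cthickening r C))
  exact (le_limsup_of_frequently_le' hev.frequently).trans
    (limsup_measure_closed_le_of_tendsto hlim isClosed_cthickening)

theorem measure_notMem_Ioo_of_tendsto [BorelSpace X] [L.NeBot] (hlim : Tendsto μs L (𝓝 μ))
    (hgap : ∀ i A, MeasurableSet A → (μs i : Measure X) A ∉ Ioo a b) {A : Set X}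
    (hA : MeasurableSet A) : (μ : Measure X) A ∉ Ioo a b := by
  rintro ⟨ha, hb⟩
  obtain ⟨K, hKA, hK, haK⟩ := hA.exists_lt_isClosed_of_ne_top (measure_ne_top _ _) ha
  exact hb.not_ge ((le_measure_isClosed_of_tendsto hlim hgap hK haK).trans (measure_mono hKA))

end ProbabilityMeasure

end MeasureTheory

namespace FiniteDeFinetti

variable {X : Type*} [MeasurableSpace X]

open Classical in
theorem empirical_apply {N : ℕ} (x : Fin N → X) {A : Set X} (hA : MeasurableSet A) :
    empirical N x A = ({i | x i ∈ A} : Finset (Fin N)).card / N := by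
  simp [empirical, Measure.finsetSum_apply, Measure.dirac_apply' _ hA, Set.indicator_apply,
    Finset.sum_boole, ENNReal.div_eq_inv_mul]

theorem mem_quantized_iff_forall_notMem_Ioo [TopologicalSpace X]
    [TopologicalSpace.MetrizableSpace X] [SecondCountableTopology X] [OpensMeasurableSpace X]
    {N : ℕ} (hN : N ≠ 0) (μ : Measure X) [IsProbabilityMeasure μ] :
    μ ∈ Quantized N ↔
      ∀ A, MeasurableSet A → ∀ m < N, μ A ∉ Ioo ((m : ℝ≥0∞) / N) ((m + 1) / N) := by
  constructor
  · rintro ⟨x, rfl⟩ A hA m -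
    rw [empirical_apply x hA]
    exact ENNReal.natCast_div_notMem_Ioo _ m N
  · intro h
    have hμ : ∀ A, MeasurableSet A → ∃ j : ℕ, μ A = j / N := fun A hA =>
      ENNReal.exists_eq_natCast_div_of_forall_notMem_Ioo
        (prob_le_one.trans_eq (ENNReal.div_self (by simpa using hN) (natCast_ne_top N)).symm)
        (h A hA)
    exact exists_eq_inv_smul_sum_dirac hN hμ
      (by rw [measure_univ, ENNReal.div_self (by simpa using hN) (natCast_ne_top N)])

theorem narrowTendsto_iff_tendsto [TopologicalSpace X] [OpensMeasurableSpace X]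
    {μs : ℕ → ProbabilityMeasure X} {μ : ProbabilityMeasure X} :
    NarrowTendsto (fun n => (μs n : Measure X)) μ ↔ Tendsto μs atTop (𝓝 μ) :=
  ProbabilityMeasure.tendsto_iff_forall_integral_tendsto.symm

/-- (a) A probability measure `λ` on a Polish space `X` is `1/N`-quantized iff
for every `m ∈ {0,…,N−1}` and every Borel set `A`,
`λ(A)² − ((2m+1)/N)·λ(A) + m(m+1)/N² ≥ 0`.
(b) The set `𝒫_{1/N}(X)` is closed under narrow convergence. -/
theorem quantized_iff_quadratic_and_closed
    {X : Type*} [MeasurableSpace X] [TopologicalSpace X] [PolishSpace X] [BorelSpace X]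
    {N : ℕ} (hN : 1 ≤ N) :
    (∀ lam : Measure X, IsProbabilityMeasure lam →
      (lam ∈ Quantized (X := X) N ↔
        ∀ m : ℕ, m < N → ∀ A : Set X, MeasurableSet A →
          (lam A).toReal ^ 2 - ((2 * m + 1 : ℝ) / N) * (lam A).toReal
              + (m * (m + 1) : ℝ) / N ^ 2 ≥ 0)) ∧
    (∀ (lams : ℕ → Measure X) (lam : Measure X),
      (∀ n, lams n ∈ Quantized (X := X) N) → (∀ n, IsProbabilityMeasure (lams n)) →
      IsProbabilityMeasure lam → NarrowTendsto lams lam →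
      lam ∈ Quantized (X := X) N) := by
  have hN0 : N ≠ 0 := Nat.one_le_iff_ne_zero.1 hN
  refine ⟨fun lam hlam => ?_, fun lams lam hq hlams hlam hlim => ?_⟩
  · rw [mem_quantized_iff_forall_notMem_Ioo hN0]
    simp only [ge_iff_le, quadratic_nonneg_iff_notMem_Ioo hN0,
      ← ENNReal.notMem_Ioo_natCast_div_iff_toReal (measure_ne_top lam _) hN0]
    exact ⟨fun h m hm A hA => h A hA m hm, fun h A hA m hm => h m hm A hA⟩
  · simp only [mem_quantized_iff_forall_notMem_Ioo hN0] at hq ⊢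
    have hlim' := (narrowTendsto_iff_tendsto (μs := fun n => ⟨lams n, hlams n⟩)
      (μ := ⟨lam, hlam⟩)).1 hlim
    exact fun A hA m hm => ProbabilityMeasure.measure_notMem_Ioo_of_tendsto hlim'
      (fun n B hB => hq n B hB m hm) hA

end FiniteDeFinetti
end
end

section
/- Let X = {a_1, …, a_ℓ} be a finite set of ℓ distinct points, and let 2 ≤ k ≤ N. A measure μ on X^k is an extreme point of 𝒫_{N-rep}(X^k) if and only if it is of the form μ = M_k S_N δ_{(a_{i_1},…,a_{i_N})} for some indices 1 ≤ i_1 ≤ … ≤ i_N ≤ ℓ. Moreover, the marginal map M_k restricts to a bijection from the set of extreme points of 𝒫_sym(X^N) onto the set of extreme points of 𝒫_{N-rep}(X^k). -/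
open MeasureTheory Filter Topology ENNReal

noncomputable section

namespace FiniteDeFinetti

variable {X : Type*}

/-!
A symmetric measure on the finite set `X^N` is a convex combination of the symmetrized Dirac
measures `S_N δ_x` (`symmDirac x`), one for each orbit of coordinate permutations, so these are
the extreme points of `𝒫_sym(X^N)`.

The heart of the matter is that `M_2 γ = M_2 S_N δ_x` forces `γ = S_N δ_x` for symmetric `γ`.
The defect `D_x(y) = ∑_a (#{i | y_i = a} - #{i | x_i = a})²` (`countDefect x y`) is
nonnegative, vanishes exactly on the orbit of `x`, and is a sum of functions of pairs
`(y_i, y_j)`; for symmetric `γ` its integral is therefore determined by `M_2 γ`, so it is `0`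
as for `S_N δ_x`. Hence `γ` lives on the orbit of `x`, where `S_N δ_x` is the only symmetric
probability measure. Extremality of `M_k S_N δ_x` in `𝒫_{N-rep}(X^k)` follows: a convex
combination equal to it lifts to a convex combination equal to `S_N δ_x`, whose parts then
live on the orbit too.
-/

lemma inv_factorial_smul_sum_const {N : ℕ} {M : Type*} [AddCommMonoid M] [Module ℝ≥0∞ M] (m : M) :
    (N.factorial : ℝ≥0∞)⁻¹ • ∑ _σ : Equiv.Perm (Fin N), m = m := by
  rw [Finset.sum_const, Finset.card_univ, Fintype.card_perm, Fintype.card_fin,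
    ← Nat.cast_smul_eq_nsmul ℝ≥0∞, smul_smul,
    ENNReal.inv_mul_cancel (by exact_mod_cast N.factorial_ne_zero) (natCast_ne_top _), one_smul]

section Symmetrization

variable {X : Type*} [MeasurableSpace X] {k N : ℕ}

lemma measurable_comp_perm (σ : Equiv.Perm (Fin N)) :
    Measurable (fun (x : Fin N → X) i => x (σ i)) := by
  fun_prop

lemma map_comp_perm_map_comp_perm (γ : Measure (Fin N → X)) (σ τ : Equiv.Perm (Fin N)) :
    (γ.map fun x i => x (τ i)).map (fun x i => x (σ i)) = γ.map fun x i => x ((τ * σ) i) := by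
  rw [Measure.map_map (measurable_comp_perm σ) (measurable_comp_perm τ)]
  rfl

lemma map_comp_perm_symmetrize (γ : Measure (Fin N → X)) (σ : Equiv.Perm (Fin N)) :
    (symmetrize N γ).map (fun x i => x (σ i)) = symmetrize N γ := by
  rw [symmetrize, Measure.map_smul, Measure.map_finset_sum (measurable_comp_perm σ).aemeasurable]
  simp_rw [map_comp_perm_map_comp_perm]
  exact congrArg _ (Equiv.sum_comp (Equiv.mulRight σ) fun τ => γ.map fun x i => x (τ i))

lemma symmetrize_map_comp_perm (γ : Measure (Fin N → X)) (σ : Equiv.Perm (Fin N)) :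
    symmetrize N (γ.map fun x i => x (σ i)) = symmetrize N γ := by
  simp_rw [symmetrize, map_comp_perm_map_comp_perm]
  exact congrArg _ (Equiv.sum_comp (Equiv.mulLeft σ) fun τ => γ.map fun x i => x (τ i))

lemma symmetrize_eq_self_of_forall_map_eq {γ : Measure (Fin N → X)}
    (hγ : ∀ σ : Equiv.Perm (Fin N), γ.map (fun x i => x (σ i)) = γ) : symmetrize N γ = γ := by
  rw [symmetrize, Finset.sum_congr rfl fun σ _ => hγ σ, inv_factorial_smul_sum_const]

lemma symmetrize_apply_univ (γ : Measure (Fin N → X)) : symmetrize N γ Set.univ = γ Set.univ := by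
  simp_rw [symmetrize, Measure.smul_apply, Measure.finsetSum_apply,
    Measure.map_apply (measurable_comp_perm _) MeasurableSet.univ, Set.preimage_univ]
  exact inv_factorial_smul_sum_const _

lemma mem_PsymSet_iff {γ : Measure (Fin N → X)} :
    γ ∈ PsymSet N ↔
      IsProbabilityMeasure γ ∧ ∀ σ : Equiv.Perm (Fin N), γ.map (fun x i => x (σ i)) = γ := by
  refine and_congr_right fun _ =>
    ⟨fun h σ => ?_, fun h => (symmetrize_eq_self_of_forall_map_eq h).symm⟩
  rw [h, map_comp_perm_symmetrize]

lemma symmetrize_mem_PsymSet (γ : Measure (Fin N → X)) [IsProbabilityMeasure γ] :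
    symmetrize N γ ∈ PsymSet N :=
  mem_PsymSet_iff.2 ⟨⟨by rw [symmetrize_apply_univ, measure_univ]⟩, map_comp_perm_symmetrize γ⟩

lemma marginal_marginal {j : ℕ} (hjk : j ≤ k) (hkN : k ≤ N) (γ : Measure (Fin N → X)) :
    marginal hjk (marginal hkN γ) = marginal (hjk.trans hkN) γ := by
  rw [marginal, marginal, marginal, Measure.map_map (by fun_prop) (by fun_prop)]
  rfl

lemma marginal_smul_add_smul (h : k ≤ N) (γ₁ γ₂ : Measure (Fin N → X)) (s t : ℝ≥0∞) :
    marginal h (s • γ₁ + t • γ₂) = s • marginal h γ₁ + t • marginal h γ₂ := by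
  rw [marginal, Measure.map_add _ _ (by fun_prop), Measure.map_smul, Measure.map_smul]
  rfl

lemma smul_add_smul_mem_PsymSet {γ₁ γ₂ : Measure (Fin N → X)} (h₁ : γ₁ ∈ PsymSet N)
    (h₂ : γ₂ ∈ PsymSet N) {t : ℝ≥0∞} (ht : t ≤ 1) : t • γ₁ + (1 - t) • γ₂ ∈ PsymSet N := by
  obtain ⟨hp₁, hσ₁⟩ := mem_PsymSet_iff.1 h₁
  obtain ⟨hp₂, hσ₂⟩ := mem_PsymSet_iff.1 h₂
  refine mem_PsymSet_iff.2 ⟨⟨?_⟩, fun σ => ?_⟩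
  · simp [add_tsub_cancel_of_le ht]
  · rw [Measure.map_add _ _ (measurable_comp_perm σ), Measure.map_smul, Measure.map_smul, hσ₁, hσ₂]

end Symmetrization

section Rearrangements

variable {X : Type*} {N : ℕ}

def rearrangements (x : Fin N → X) : Set (Fin N → X) :=
  {y | ∃ σ : Equiv.Perm (Fin N), y = fun i => x (σ i)}

lemma mem_rearrangements_self (x : Fin N → X) : x ∈ rearrangements x :=
  ⟨1, rfl⟩

lemma preimage_comp_perm_rearrangements (x : Fin N → X) (σ : Equiv.Perm (Fin N)) :
    (fun y i => y (σ i)) ⁻¹' rearrangements x = rearrangements x := by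
  ext y
  refine ⟨fun ⟨τ, hτ⟩ => ⟨τ * σ⁻¹, funext fun i => ?_⟩, fun ⟨τ, hτ⟩ => ⟨τ * σ, by subst hτ; rfl⟩⟩
  simpa using congrFun hτ (σ⁻¹ i)

variable [MeasurableSpace X]

def symmDirac (x : Fin N → X) : Measure (Fin N → X) :=
  symmetrize N (Measure.dirac x)

lemma symmDirac_mem_PsymSet (x : Fin N → X) : symmDirac x ∈ PsymSet N :=
  symmetrize_mem_PsymSet _

lemma symmDirac_comp_perm (x : Fin N → X) (σ : Equiv.Perm (Fin N)) :
    symmDirac (fun i => x (σ i)) = symmDirac x := by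
  rw [symmDirac, ← Measure.map_dirac' (measurable_comp_perm σ), symmetrize_map_comp_perm]
  rfl

lemma symmDirac_eq_of_mem_rearrangements {x y : Fin N → X} (hy : y ∈ rearrangements x) :
    symmDirac y = symmDirac x := by
  obtain ⟨σ, rfl⟩ := hy
  exact symmDirac_comp_perm x σ

lemma symmDirac_apply_compl_rearrangements [MeasurableSingletonClass X] (x : Fin N → X) :
    symmDirac x (rearrangements x)ᶜ = 0 := by
  rw [symmDirac, symmetrize, Measure.smul_apply, Measure.finsetSum_apply,
    Finset.sum_eq_zero fun σ _ => ?_, smul_zero]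
  rw [Measure.map_dirac' (measurable_comp_perm σ), Measure.dirac_apply,
    Set.indicator_of_notMem (Set.notMem_compl_iff.2 (by exact ⟨σ, rfl⟩))]

lemma map_comp_perm_restrict {γ : Measure (Fin N → X)}
    (hγ : ∀ σ : Equiv.Perm (Fin N), γ.map (fun x i => x (σ i)) = γ) {s : Set (Fin N → X)}
    (hs : MeasurableSet s) (hsσ : ∀ σ : Equiv.Perm (Fin N), (fun x i => x (σ i)) ⁻¹' s = s)
    (σ : Equiv.Perm (Fin N)) : (γ.restrict s).map (fun x i => x (σ i)) = γ.restrict s := by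
  conv_lhs => rw [← hsσ σ]
  rw [← Measure.restrict_map (measurable_comp_perm σ) hs, hγ]

variable [Fintype X] [MeasurableSingletonClass X]

lemma symmetrize_eq_sum_smul_symmDirac (γ : Measure (Fin N → X)) :
    symmetrize N γ = ∑ y, γ {y} • symmDirac y := by
  conv_lhs => rw [← Measure.sum_smul_dirac γ, Measure.sum_fintype]
  simp_rw [symmDirac, symmetrize, Finset.smul_sum,
    Measure.map_finset_sum (measurable_comp_perm _).aemeasurable, Measure.map_smul, Finset.smul_sum]
  rw [Finset.sum_comm]
  simp_rw [smul_comm (N.factorial : ℝ≥0∞)⁻¹]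

lemma restrict_rearrangements_eq_smul_symmDirac {γ : Measure (Fin N → X)}
    (hγ : ∀ σ : Equiv.Perm (Fin N), γ.map (fun x i => x (σ i)) = γ) (x : Fin N → X) :
    γ.restrict (rearrangements x) = γ (rearrangements x) • symmDirac x := by
  set ρ := γ.restrict (rearrangements x)
  have hρ : ∀ y, ρ {y} • symmDirac y = ρ {y} • symmDirac x := fun y => by
    by_cases hy : y ∈ rearrangements x
    · rw [symmDirac_eq_of_mem_rearrangements hy]
    · rw [Measure.restrict_apply (measurableSet_singleton y),
        Set.singleton_inter_eq_empty.2 hy, measure_empty, zero_smul, zero_smul]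
  calc ρ = symmetrize N ρ := (symmetrize_eq_self_of_forall_map_eq <|
          map_comp_perm_restrict hγ .of_discrete (preimage_comp_perm_rearrangements x)).symm
    _ = (∑ y, ρ {y}) • symmDirac x := by
      rw [symmetrize_eq_sum_smul_symmDirac, Finset.sum_congr rfl fun y _ => hρ y, Finset.sum_smul]
    _ = γ (rearrangements x) • symmDirac x := by
      rw [sum_measure_singleton, Finset.coe_univ, Measure.restrict_apply_univ]

end Rearrangements

section Counts

variable {X : Type*} [DecidableEq X] {N : ℕ}

def count (y : Fin N → X) (a : X) : ℕ :=
  Fintype.card {i // y i = a}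

lemma mem_rearrangements_iff_count_eq {x y : Fin N → X} :
    y ∈ rearrangements x ↔ count y = count x := by
  constructor
  · rintro ⟨σ, rfl⟩
    exact funext fun a => Fintype.card_congr (σ.subtypeEquiv fun _ => Iff.rfl)
  · intro h
    let e : ∀ a, {i // y i = a} ≃ {i // x i = a} := fun a =>
      Fintype.equivOfCardEq (congrFun h a)
    exact ⟨Equiv.ofFiberEquiv e, funext fun i => (Equiv.ofFiberEquiv_map e i).symm⟩

lemma count_eq_sum_ite (y : Fin N → X) (a : X) :
    (count y a : ℝ) = ∑ i, if y i = a then 1 else 0 := by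
  rw [Finset.sum_boole, count, Fintype.card_subtype]

variable [Fintype X]

def countDefect (x y : Fin N → X) : ℝ :=
  ∑ a, ((count y a : ℝ) - count x a) ^ 2

lemma countDefect_nonneg (x y : Fin N → X) : 0 ≤ countDefect x y :=
  Finset.sum_nonneg fun _ _ => sq_nonneg _

lemma countDefect_eq_zero_iff {x y : Fin N → X} :
    countDefect x y = 0 ↔ y ∈ rearrangements x := by
  rw [countDefect, Finset.sum_eq_zero_iff_of_nonneg fun _ _ => sq_nonneg _,
    mem_rearrangements_iff_count_eq, funext_iff]
  simp [sub_eq_zero]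

lemma countDefect_eq_sum_sum_sum (hN : N ≠ 0) (x y : Fin N → X) :
    countDefect x y = ∑ a, ∑ i, ∑ j,
      ((if y i = a then 1 else 0) - (count x a : ℝ) / N) *
        ((if y j = a then 1 else 0) - (count x a : ℝ) / N) := by
  refine Finset.sum_congr rfl fun a _ => ?_
  have hsum : (count y a : ℝ) - count x a =
      ∑ i, ((if y i = a then 1 else 0) - (count x a : ℝ) / N) := by
    rw [Finset.sum_sub_distrib, count_eq_sum_ite, Finset.sum_const, Finset.card_univ,
      Fintype.card_fin, nsmul_eq_mul, mul_div_cancel₀ _ (Nat.cast_ne_zero.2 hN)]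
  rw [hsum, sq, Finset.sum_mul_sum]

end Counts

section OrbitDecomposition

variable {X : Type*} [MeasurableSpace X] [Fintype X] [MeasurableSingletonClass X] {N : ℕ}

lemma eq_symmDirac_of_apply_compl_eq_zero {γ : Measure (Fin N → X)} (hγ : γ ∈ PsymSet N)
    {x : Fin N → X} (h : γ (rearrangements x)ᶜ = 0) : γ = symmDirac x := by
  obtain ⟨hprob, hinv⟩ := mem_PsymSet_iff.1 hγ
  calc γ = γ.restrict (rearrangements x) := (Measure.restrict_eq_self_of_ae_mem (ae_iff.2 h)).symm
    _ = symmDirac x := by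
      rw [restrict_rearrangements_eq_smul_symmDirac hinv,
        (prob_compl_eq_zero_iff .of_discrete).1 h, one_smul]

lemma eq_symmDirac_of_smul_add_smul_eq {γ₁ γ₂ : Measure (Fin N → X)} (h₁ : γ₁ ∈ PsymSet N)
    (h₂ : γ₂ ∈ PsymSet N) {t : ℝ≥0∞} (ht₀ : 0 < t) (ht₁ : t < 1) {x : Fin N → X}
    (h : t • γ₁ + (1 - t) • γ₂ = symmDirac x) : γ₁ = symmDirac x ∧ γ₂ = symmDirac x := by
  have h0 := symmDirac_apply_compl_rearrangements x
  rw [← h, Measure.add_apply, Measure.smul_apply, Measure.smul_apply, smul_eq_mul, smul_eq_mul,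
    add_eq_zero, mul_eq_zero, mul_eq_zero] at h0
  exact ⟨eq_symmDirac_of_apply_compl_eq_zero h₁ (h0.1.resolve_left ht₀.ne'),
    eq_symmDirac_of_apply_compl_eq_zero h₂ (h0.2.resolve_left (tsub_pos_of_lt ht₁).ne')⟩

lemma exists_eq_symmDirac_or_smul_add_smul {γ : Measure (Fin N → X)} (hγ : γ ∈ PsymSet N) :
    ∃ x, γ = symmDirac x ∨ ∃ t : ℝ≥0∞, 0 < t ∧ t < 1 ∧
      ∃ γ' ∈ PsymSet N, γ = t • symmDirac x + (1 - t) • γ' := by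
  obtain ⟨hprob, hinv⟩ := mem_PsymSet_iff.1 hγ
  obtain ⟨x, -, hx⟩ : ∃ x ∈ Finset.univ, γ {x} ≠ 0 := Finset.exists_ne_zero_of_sum_ne_zero <| by
    rw [sum_measure_singleton, Finset.coe_univ, measure_univ]
    exact one_ne_zero
  set O := rearrangements x
  have hO : MeasurableSet O := .of_discrete
  have ht₀ : 0 < γ O := (pos_iff_ne_zero.2 hx).trans_le
    (measure_mono (Set.singleton_subset_iff.2 (mem_rearrangements_self x)))
  have hγ_eq : γ = γ O • symmDirac x + γ.restrict Oᶜ := by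
    rw [← restrict_rearrangements_eq_smul_symmDirac hinv, Measure.restrict_add_restrict_compl hO]
  refine ⟨x, prob_le_one.eq_or_lt.imp (fun ht₁ => ?_)
    (fun ht₁ => ⟨γ O, ht₀, ht₁, (1 - γ O)⁻¹ • γ.restrict Oᶜ, ?_, ?_⟩)⟩
  · rw [hγ_eq, ht₁, Measure.restrict_eq_zero.2 ((prob_compl_eq_zero_iff hO).2 ht₁), one_smul,
      add_zero]
  · have h1t : (1 - γ O) ≠ 0 := (tsub_pos_of_lt ht₁).ne'
    refine mem_PsymSet_iff.2 ⟨⟨?_⟩, fun σ => ?_⟩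
    · rw [Measure.smul_apply, Measure.restrict_apply_univ, prob_compl_eq_one_sub hO, smul_eq_mul,
        ENNReal.inv_mul_cancel h1t (ENNReal.sub_ne_top ENNReal.one_ne_top)]
    · rw [Measure.map_smul, map_comp_perm_restrict hinv hO.compl
        (fun τ => by rw [Set.preimage_compl, preimage_comp_perm_rearrangements]) σ]
  · rw [smul_smul, ENNReal.mul_inv_cancel (tsub_pos_of_lt ht₁).ne'
      (ENNReal.sub_ne_top ENNReal.one_ne_top), one_smul]
    exact hγ_eq

end OrbitDecomposition

lemma exists_perm_apply_eq_and_apply_eq {α : Type*} [DecidableEq α] {p q i j : α}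
    (hpq : p ≠ q) (hij : i ≠ j) : ∃ σ : Equiv.Perm α, σ p = i ∧ σ q = j := by
  set τ := Equiv.swap p i
  have hτj : τ j ≠ p := fun h => hij <| by simpa [τ] using (congrArg τ h).symm
  refine ⟨τ * Equiv.swap q (τ j), ?_, ?_⟩
  · rw [Equiv.Perm.mul_apply, Equiv.swap_apply_of_ne_of_ne hpq hτj.symm, Equiv.swap_apply_left]
  · rw [Equiv.Perm.mul_apply, Equiv.swap_apply_left, Equiv.swap_apply_self]

section TwoPointMarginal

variable {X : Type*} [MeasurableSpace X] [Fintype X] [MeasurableSingletonClass X] {k N : ℕ}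

lemma integral_comp_perm {γ : Measure (Fin N → X)} (hγ : γ ∈ PsymSet N)
    (φ : (Fin N → X) → ℝ) (σ : Equiv.Perm (Fin N)) :
    ∫ y, φ (fun i => y (σ i)) ∂γ = ∫ y, φ y ∂γ := by
  conv_rhs => rw [← (mem_PsymSet_iff.1 hγ).2 σ]
  exact (integral_map (measurable_comp_perm σ).aemeasurable
    (measurable_of_countable φ).aestronglyMeasurable).symm

lemma integral_marginal (h : k ≤ N) (γ : Measure (Fin N → X)) (ψ : (Fin k → X) → ℝ) :
    ∫ z, ψ z ∂(marginal h γ) = ∫ y, ψ (fun i => y (Fin.castLE h i)) ∂γ :=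
  integral_map (measurable_of_countable _).aemeasurable
    (measurable_of_countable ψ).aestronglyMeasurable

lemma integral_apply_apply_eq_of_marginal_eq (h : 2 ≤ N) {γ γ' : Measure (Fin N → X)}
    (hγ : γ ∈ PsymSet N) (hγ' : γ' ∈ PsymSet N) (hm : marginal h γ = marginal h γ')
    (f : X → X → ℝ) (i j : Fin N) :
    ∫ y, f (y i) (y j) ∂γ = ∫ y, f (y i) (y j) ∂γ' := by
  have hne (g : X → X → ℝ) (i j : Fin N) (hij : i ≠ j) :
      ∫ y, g (y i) (y j) ∂γ = ∫ y, g (y i) (y j) ∂γ' := by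
    obtain ⟨σ, hσi, hσj⟩ := exists_perm_apply_eq_and_apply_eq
      (p := Fin.castLE h 0) (q := Fin.castLE h 1) (by simp [Fin.ext_iff]) hij
    have key : ∀ ρ ∈ PsymSet N, ∫ y, g (y i) (y j) ∂ρ = ∫ z, g (z 0) (z 1) ∂(marginal h ρ) :=
      fun ρ hρ => by
        have := integral_comp_perm hρ (fun y => g (y (Fin.castLE h 0)) (y (Fin.castLE h 1))) σ
        simp only [hσi, hσj] at this
        rw [integral_marginal, this]
    rw [key γ hγ, key γ' hγ', hm]
  rcases eq_or_ne i j with rfl | hij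
  -- `f (y i) (y i)` is also a function of the pair `(y i, y j)` for any `j ≠ i`.
  · have : Nontrivial (Fin N) := Fin.nontrivial_iff_two_le.2 h
    obtain ⟨j, hj⟩ := exists_ne i
    exact hne (fun u _ => f u u) i j hj.symm
  · exact hne f i j hij

lemma integral_countDefect_eq_of_marginal_eq [DecidableEq X] (h : 2 ≤ N)
    {γ γ' : Measure (Fin N → X)}
    (hγ : γ ∈ PsymSet N) (hγ' : γ' ∈ PsymSet N) (hm : marginal h γ = marginal h γ')
    (x : Fin N → X) :
    ∫ y, countDefect x y ∂γ = ∫ y, countDefect x y ∂γ' := by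
  have := hγ.1
  have := hγ'.1
  simp_rw [countDefect_eq_sum_sum_sum (by omega : N ≠ 0)]
  simp_rw [integral_finsetSum _ fun _ _ => Integrable.of_finite]
  refine Finset.sum_congr rfl fun a _ => Finset.sum_congr rfl fun i _ =>
    Finset.sum_congr rfl fun j _ => ?_
  exact integral_apply_apply_eq_of_marginal_eq h hγ hγ' hm
    (fun u v => ((if u = a then 1 else 0) - (count x a : ℝ) / N) *
      ((if v = a then 1 else 0) - (count x a : ℝ) / N)) i j

lemma eq_symmDirac_of_marginal_two_eq (h : 2 ≤ N) {γ : Measure (Fin N → X)} (hγ : γ ∈ PsymSet N)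
    {x : Fin N → X} (hm : marginal h γ = marginal h (symmDirac x)) : γ = symmDirac x := by
  classical
  have := hγ.1
  have hint : ∫ y, countDefect x y ∂γ = 0 := by
    rw [integral_countDefect_eq_of_marginal_eq h hγ (symmDirac_mem_PsymSet x) hm]
    refine integral_eq_zero_of_ae (ae_iff.2 (measure_mono_null (fun y hy => ?_)
      (symmDirac_apply_compl_rearrangements x)))
    exact fun hr => hy (countDefect_eq_zero_iff.2 hr)
  have hae := (integral_eq_zero_iff_of_nonneg (countDefect_nonneg x) Integrable.of_finite).1 hint
  exact eq_symmDirac_of_apply_compl_eq_zero hγ (measure_mono_null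
    (fun y hy => mt countDefect_eq_zero_iff.1 hy) (ae_iff.1 hae))

lemma eq_symmDirac_of_marginal_eq (hk : 2 ≤ k) (hkN : k ≤ N) {γ : Measure (Fin N → X)}
    (hγ : γ ∈ PsymSet N) {x : Fin N → X} (hm : marginal hkN γ = marginal hkN (symmDirac x)) :
    γ = symmDirac x :=
  eq_symmDirac_of_marginal_two_eq (hk.trans hkN) hγ <| by
    rw [← marginal_marginal hk hkN, hm, marginal_marginal]

end TwoPointMarginal

section ExtremePoints

variable {X : Type*} [MeasurableSpace X] [Fintype X] [MeasurableSingletonClass X] {k N : ℕ}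

lemma isExtremePt_PsymSet_iff {γ : Measure (Fin N → X)} :
    IsExtremePt (PsymSet N) γ ↔ ∃ x, γ = symmDirac x := by
  constructor
  · rintro ⟨hγ, hext⟩
    obtain ⟨x, rfl | ⟨t, ht₀, ht₁, γ', hγ', rfl⟩⟩ := exists_eq_symmDirac_or_smul_add_smul hγ
    · exact ⟨x, rfl⟩
    · exact ⟨x, (hext _ (symmDirac_mem_PsymSet x) γ' hγ' t ht₀ ht₁ rfl).1.symm⟩
  · rintro ⟨x, rfl⟩
    exact ⟨symmDirac_mem_PsymSet x, fun γ₁ h₁ γ₂ h₂ t ht₀ ht₁ h =>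
      eq_symmDirac_of_smul_add_smul_eq h₁ h₂ ht₀ ht₁ h.symm⟩

lemma isExtremePt_NRep_iff (hk : 2 ≤ k) (hkN : k ≤ N) {μ : Measure (Fin k → X)} :
    IsExtremePt (NRep hkN) μ ↔ ∃ x, μ = marginal hkN (symmDirac x) := by
  constructor
  · rintro ⟨⟨γ, hγ, rfl⟩, hext⟩
    obtain ⟨x, rfl | ⟨t, ht₀, ht₁, γ', hγ', rfl⟩⟩ := exists_eq_symmDirac_or_smul_add_smul hγ
    · exact ⟨x, rfl⟩
    · exact ⟨x, (hext _ ⟨_, symmDirac_mem_PsymSet x, rfl⟩ _ ⟨γ', hγ', rfl⟩ t ht₀ ht₁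
        (marginal_smul_add_smul _ _ _ _ _)).1.symm⟩
  · rintro ⟨x, rfl⟩
    refine ⟨⟨_, symmDirac_mem_PsymSet x, rfl⟩, ?_⟩
    rintro _ ⟨γ₁, h₁, rfl⟩ _ ⟨γ₂, h₂, rfl⟩ t ht₀ ht₁ h
    rw [← marginal_smul_add_smul] at h
    obtain ⟨rfl, rfl⟩ := eq_symmDirac_of_smul_add_smul_eq h₁ h₂ ht₀ ht₁
      (eq_symmDirac_of_marginal_eq hk hkN (smul_add_smul_mem_PsymSet h₁ h₂ ht₁.le) h.symm)
    exact ⟨rfl, rfl⟩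

end ExtremePoints

lemma exists_monotone_symmDirac_eq {X : Type*} [MeasurableSpace X] {ℓ N : ℕ} (a : Fin ℓ ≃ X)
    (x : Fin N → X) :
    ∃ i : Fin N → Fin ℓ, Monotone i ∧ symmDirac x = symmDirac fun j => a (i j) := by
  refine ⟨(a.symm ∘ x) ∘ Tuple.sort (a.symm ∘ x), Tuple.monotone_sort _, ?_⟩
  simp only [Function.comp_apply, Equiv.apply_symm_apply]
  exact (symmDirac_comp_perm x _).symm

theorem extreme_points_finite_state_general
    {X : Type*} [Fintype X] [MeasurableSpace X] [MeasurableSingletonClass X]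
    {ℓ k N : ℕ} (a : Fin ℓ ≃ X) (hk : 2 ≤ k) (hkN : k ≤ N) :
    (∀ μ : Measure (Fin k → X),
      IsExtremePt (NRep (X := X) hkN) μ ↔
        ∃ i : Fin N → Fin ℓ, Monotone i ∧
          μ = marginal hkN (symmetrize N (Measure.dirac (fun j => a (i j))))) ∧
    Set.BijOn (marginal (X := X) hkN)
      {γ | IsExtremePt (PsymSet (X := X) N) γ}
      {μ | IsExtremePt (NRep (X := X) hkN) μ} := by
  refine ⟨fun μ => (isExtremePt_NRep_iff hk hkN).trans ⟨?_, ?_⟩, ?_, ?_, ?_⟩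
  · rintro ⟨x, rfl⟩
    obtain ⟨i, hi, hx⟩ := exists_monotone_symmDirac_eq a x
    exact ⟨i, hi, by rw [hx, symmDirac]⟩
  · rintro ⟨i, -, rfl⟩
    exact ⟨_, rfl⟩
  · rintro γ hγ
    obtain ⟨x, rfl⟩ := isExtremePt_PsymSet_iff.1 hγ
    exact (isExtremePt_NRep_iff hk hkN).2 ⟨x, rfl⟩
  · rintro γ hγ γ' hγ' hm
    obtain ⟨x', rfl⟩ := isExtremePt_PsymSet_iff.1 hγ'
    exact eq_symmDirac_of_marginal_eq hk hkN hγ.1 hm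
  · rintro μ hμ
    obtain ⟨x, rfl⟩ := (isExtremePt_NRep_iff hk hkN).1 hμ
    exact ⟨symmDirac x, isExtremePt_PsymSet_iff.2 ⟨x, rfl⟩, rfl⟩

/-- On a finite state space `X = {a_1,…,a_ℓ}` and for `2 ≤ k ≤ N`:
a measure `μ` on `X^k` is an extreme point of `𝒫_{N-rep}(X^k)` iff it has the form
`M_k S_N δ_{(a_{i_1},…,a_{i_N})}` for some `1 ≤ i_1 ≤ … ≤ i_N ≤ ℓ`; moreover `M_k` restricts
to a bijection from the extreme points of `𝒫_sym(X^N)` onto those of `𝒫_{N-rep}(X^k)`. -/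
theorem extreme_points_finite_state
    {X : Type*} [Fintype X] [DecidableEq X] [MeasurableSpace X] [MeasurableSingletonClass X]
    {ℓ k N : ℕ} (a : Fin ℓ ≃ X) (hk : 2 ≤ k) (hkN : k ≤ N) :
    (∀ μ : Measure (Fin k → X),
      IsExtremePt (NRep (X := X) hkN) μ ↔
        ∃ i : Fin N → Fin ℓ, Monotone i ∧
          μ = marginal hkN (symmetrize N (Measure.dirac (fun j => a (i j))))) ∧
    Set.BijOn (marginal (X := X) hkN)
      {γ | IsExtremePt (PsymSet (X := X) N) γ}
      {μ | IsExtremePt (NRep (X := X) hkN) μ} :=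
  extreme_points_finite_state_general a hk hkN
end FiniteDeFinetti
end
end

section
/- Let X be a finite set with ℓ distinct elements and let 2 ≤ k ≤ N. Then the number of extreme points of the convex set 𝒫_{N-rep}(X^k) equals the binomial coefficient C(N+ℓ−1, ℓ−1). -/
open MeasureTheory Filter Topology ENNReal

noncomputable section

namespace FiniteDeFinetti

variable {X : Type*}

section AuxDF

section Aux

set_option linter.unusedSectionVars false

variable [Fintype X] [DecidableEq X] [MeasurableSpace X] [MeasurableSingletonClass X]

/-- number of coordinates of `y` equal to `a` -/
def cnt {N : ℕ} (a : X) (y : Fin N → X) : ℕ := (Finset.univ.filter fun i => y i = a).card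

def musym {k N : ℕ} (h : k ≤ N) (y : Fin N → X) : Measure (Fin k → X) :=
  marginal h (symmetrize N (Measure.dirac y))

lemma map_finsetSum {α β ι : Type*} [MeasurableSpace α] [MeasurableSpace β] (s : Finset ι)
    (μ : ι → Measure α) {f : α → β} (hf : Measurable f) :
    (∑ i ∈ s, μ i).map f = ∑ i ∈ s, (μ i).map f := by
  classical
  induction s using Finset.induction with
  | empty => simp [Measure.map_zero]
  | @insert a s hni ih =>
    rw [Finset.sum_insert hni, Finset.sum_insert hni, Measure.map_add _ _ hf, ih]

lemma marginal_smul {k N : ℕ} (h : k ≤ N) (c : ℝ≥0∞) (γ : Measure (Fin N → X)) :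
    marginal h (c • γ) = c • marginal h γ := by
  simp [marginal, Measure.map_smul]

lemma marginal_sum {k N : ℕ} (h : k ≤ N) {ι : Type*} (s : Finset ι)
    (γ : ι → Measure (Fin N → X)) :
    marginal h (∑ i ∈ s, γ i) = ∑ i ∈ s, marginal h (γ i) := by
  simp only [marginal]
  exact map_finsetSum s γ Measurable.of_discrete

lemma symmetrize_smul {N : ℕ} (c : ℝ≥0∞) (γ : Measure (Fin N → X)) :
    symmetrize N (c • γ) = c • symmetrize N γ := by
  simp only [symmetrize, Measure.map_smul, ← Finset.smul_sum]
  rw [smul_comm]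

lemma symmetrize_sum {N : ℕ} {ι : Type*} (s : Finset ι) (γ : ι → Measure (Fin N → X)) :
    symmetrize N (∑ i ∈ s, γ i) = ∑ i ∈ s, symmetrize N (γ i) := by
  simp only [symmetrize]
  rw [Finset.sum_congr rfl fun σ (_ : σ ∈ (Finset.univ : Finset (Equiv.Perm (Fin N)))) =>
    map_finsetSum s γ (f := fun x i => x (σ i)) Measurable.of_discrete]
  rw [Finset.sum_comm, Finset.smul_sum]

lemma symmetrize_dirac {N : ℕ} (y : Fin N → X) :
    symmetrize N (Measure.dirac y)
      = (N.factorial : ℝ≥0∞)⁻¹ • ∑ σ : Equiv.Perm (Fin N),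
          Measure.dirac (fun i => y (σ i)) := by
  simp only [symmetrize]
  congr 1
  exact Finset.sum_congr rfl fun σ _ => Measure.map_dirac' Measurable.of_discrete y

lemma symmetrize_dirac_perm {N : ℕ} (y : Fin N → X) (τ : Equiv.Perm (Fin N)) :
    symmetrize N (Measure.dirac (fun i => y (τ i))) = symmetrize N (Measure.dirac y) := by
  rw [symmetrize_dirac, symmetrize_dirac]
  congr 1
  rw [← Equiv.sum_comp (Equiv.mulLeft τ)
    (fun σ : Equiv.Perm (Fin N) => Measure.dirac (fun i => y (σ i)))]
  exact Finset.sum_congr rfl fun σ _ => by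
    congr 1

lemma symmetrize_idem {N : ℕ} (y : Fin N → X) :
    symmetrize N (symmetrize N (Measure.dirac y)) = symmetrize N (Measure.dirac y) := by
  rw [symmetrize_dirac, symmetrize_smul, symmetrize_sum]
  have : ∀ σ : Equiv.Perm (Fin N),
      symmetrize N (Measure.dirac fun i => y (σ i)) = symmetrize N (Measure.dirac y) :=
    fun σ => symmetrize_dirac_perm y σ
  rw [Finset.sum_congr rfl fun σ _ => this σ, Finset.sum_const, Finset.card_univ,
    Fintype.card_perm, Fintype.card_fin]
  rw [← symmetrize_dirac, ← Nat.cast_smul_eq_nsmul ℝ≥0∞, smul_smul,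
    ENNReal.inv_mul_cancel (by exact_mod_cast (Nat.factorial_pos N).ne') (natCast_ne_top _),
    one_smul]

lemma musym_eq {k N : ℕ} (h : k ≤ N) (y : Fin N → X) :
    musym h y = (N.factorial : ℝ≥0∞)⁻¹ • ∑ σ : Equiv.Perm (Fin N),
      Measure.dirac (fun i => y (σ (Fin.castLE h i))) := by
  rw [musym, symmetrize_dirac, marginal_smul, marginal_sum]
  congr 1
  refine Finset.sum_congr rfl fun σ _ => ?_
  rw [marginal, Measure.map_dirac' Measurable.of_discrete]

lemma musym_apply {k N : ℕ} (h : k ≤ N) (y : Fin N → X) (S : Set (Fin k → X)) :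
    musym h y S = (N.factorial : ℝ≥0∞)⁻¹ * ∑ σ : Equiv.Perm (Fin N),
      S.indicator (fun _ => (1:ℝ≥0∞)) (fun i => y (σ (Fin.castLE h i))) := by
  rw [musym_eq, Measure.smul_apply, Measure.finset_sum_apply, smul_eq_mul]
  congr 1
  refine Finset.sum_congr rfl fun σ _ => ?_
  rw [Measure.dirac_apply' _ MeasurableSet.of_discrete]
  rfl

lemma musym_univ {k N : ℕ} (h : k ≤ N) (hN : 0 < N) (y : Fin N → X) :
    musym h y Set.univ = 1 := by
  rw [musym_apply]
  simp only [Set.indicator_univ, Finset.sum_const, Finset.card_univ, Fintype.card_perm,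
    Fintype.card_fin, nsmul_eq_mul, mul_one]
  exact ENNReal.inv_mul_cancel (by exact_mod_cast (Nat.factorial_pos N).ne') (natCast_ne_top _)

lemma musym_perm {k N : ℕ} (h : k ≤ N) (y : Fin N → X) (τ : Equiv.Perm (Fin N)) :
    musym h (fun i => y (τ i)) = musym h y := by
  rw [musym, musym, symmetrize_dirac_perm]

lemma meas_decomp {m : ℕ} (γ : Measure (Fin m → X)) :
    γ = ∑ y : Fin m → X, γ {y} • Measure.dirac y := by
  conv_lhs => rw [← Measure.sum_smul_dirac γ]
  rw [Measure.sum_fintype]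

lemma mem_NRep_iff {k N : ℕ} (h : k ≤ N) (hN : 0 < N) (μ : Measure (Fin k → X)) :
    μ ∈ NRep (X := X) h ↔
      ∃ d : (Fin N → X) → ℝ≥0∞, (∑ y, d y) = 1 ∧ μ = ∑ y, d y • musym h y := by
  constructor
  · rintro ⟨γ, ⟨hprob, hsym⟩, rfl⟩
    refine ⟨fun y => γ {y}, ?_, ?_⟩
    · have := congrArg (fun μ : Measure (Fin N → X) => μ Set.univ) (meas_decomp γ)
      simp only [Measure.coe_finset_sum, Finset.sum_apply, Measure.smul_apply,
        measure_univ, smul_eq_mul, Measure.dirac_apply' _ MeasurableSet.univ] at this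
      simp only [Set.indicator_apply, Set.mem_univ, if_true, Pi.one_apply, mul_one] at this
      exact this.symm
    · conv_lhs => rw [hsym, meas_decomp γ]
      rw [symmetrize_sum, marginal_sum]
      refine Finset.sum_congr rfl fun y _ => ?_
      rw [symmetrize_smul, marginal_smul, musym]
  · rintro ⟨d, hd1, rfl⟩
    refine ⟨∑ y, d y • symmetrize N (Measure.dirac y), ⟨?_, ?_⟩, ?_⟩
    · constructor
      have : ∀ y : Fin N → X, symmetrize N (Measure.dirac y) Set.univ = 1 := by
        intro y
        have h1 := musym_univ h hN y
        rw [musym, marginal, Measure.map_apply Measurable.of_discrete MeasurableSet.univ] at h1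
        simpa using h1
      simp only [Measure.coe_finset_sum, Finset.sum_apply, Measure.smul_apply, smul_eq_mul]
      rw [Finset.sum_congr rfl fun y _ => by rw [this y]]
      simpa using hd1
    · rw [symmetrize_sum]
      refine Finset.sum_congr rfl fun y _ => ?_
      rw [symmetrize_smul, symmetrize_idem]
    · rw [marginal_sum]
      exact Finset.sum_congr rfl fun y _ => by rw [marginal_smul, musym]

lemma musym_mem_NRep {k N : ℕ} (h : k ≤ N) (hN : 0 < N) (x : Fin N → X) :
    musym h x ∈ NRep (X := X) h := by
  rw [mem_NRep_iff h hN]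
  classical
  refine ⟨fun y => if y = x then 1 else 0, by simp, ?_⟩
  simp [ite_smul]

lemma sum_perm_zero {n : ℕ} (f : Fin (n+1) → ℝ≥0∞) :
    ∑ σ : Equiv.Perm (Fin (n+1)), f (σ 0) = (n.factorial : ℝ≥0∞) * ∑ j, f j := by
  rw [← Equiv.sum_comp Equiv.Perm.decomposeFin.symm (fun σ : Equiv.Perm (Fin (n+1)) => f (σ 0))]
  rw [Fintype.sum_prod_type]
  simp only [Equiv.Perm.decomposeFin_symm_apply_zero, Finset.sum_const, Finset.card_univ,
    Fintype.card_perm, Fintype.card_fin, nsmul_eq_mul]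
  rw [Finset.mul_sum]

lemma swap_succ_image {n : ℕ} (p : Fin (n+2)) :
    Finset.univ.image (fun q : Fin (n+1) => Equiv.swap 0 p q.succ) = Finset.univ.erase p := by
  apply Finset.eq_of_subset_of_card_le
  · intro j hj
    simp only [Finset.mem_image, Finset.mem_univ, true_and] at hj
    obtain ⟨q, rfl⟩ := hj
    refine Finset.mem_erase.2 ⟨?_, Finset.mem_univ _⟩
    intro hc
    have : q.succ = (0 : Fin (n+2)) := by
      have := congrArg (Equiv.swap 0 p) hc
      rwa [Equiv.swap_apply_self, Equiv.swap_apply_right] at this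
    exact Fin.succ_ne_zero q this
  · rw [Finset.card_erase_of_mem (Finset.mem_univ p), Finset.card_univ, Fintype.card_fin]
    rw [Finset.card_image_of_injective _ (fun a b hab => Fin.succ_injective _
      (Equiv.injective _ hab))]
    simp

lemma sum_perm_pair {n : ℕ} (g : Fin (n+2) → Fin (n+2) → ℝ≥0∞) :
    ∑ σ : Equiv.Perm (Fin (n+2)), g (σ 0) (σ 1)
      = (n.factorial : ℝ≥0∞) * ∑ p, ∑ q ∈ Finset.univ.erase p, g p q := by
  rw [← Equiv.sum_comp Equiv.Perm.decomposeFin.symm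
    (fun σ : Equiv.Perm (Fin (n+2)) => g (σ 0) (σ 1))]
  rw [Fintype.sum_prod_type]
  simp only [Equiv.Perm.decomposeFin_symm_apply_zero, Equiv.Perm.decomposeFin_symm_apply_one]
  rw [Finset.mul_sum]
  refine Finset.sum_congr rfl fun p _ => ?_
  rw [sum_perm_zero (fun q => g p (Equiv.swap 0 p q.succ))]
  congr 1
  rw [← swap_succ_image p, Finset.sum_image (fun a _ b _ hab =>
    Fin.succ_injective _ (Equiv.injective _ hab))]

lemma cnt_cast {N : ℕ} (a : X) (y : Fin N → X) :
    (∑ j, if y j = a then (1:ℝ≥0∞) else 0) = (cnt a y : ℝ≥0∞) := by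
  rw [Finset.sum_boole, cnt]

lemma musym_first {n k : ℕ} (hk : 0 < k) (h : k ≤ n + 2) (a : X) (y : Fin (n+2) → X) :
    musym h y {z | z ⟨0, hk⟩ = a}
      = ((n+2).factorial : ℝ≥0∞)⁻¹ * ((n+1).factorial * (cnt a y : ℝ≥0∞)) := by
  rw [musym_apply]
  congr 1
  have h0 : Fin.castLE h ⟨0, hk⟩ = (0 : Fin (n+2)) := rfl
  have : ∀ σ : Equiv.Perm (Fin (n+2)),
      ({z : Fin k → X | z ⟨0, hk⟩ = a}).indicator (fun _ => (1:ℝ≥0∞))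
        (fun i => y (σ (Fin.castLE h i)))
      = if y (σ 0) = a then 1 else 0 := by
    intro σ
    rw [Set.indicator_apply]
    simp only [Set.mem_setOf_eq, h0]
  rw [Finset.sum_congr rfl fun σ _ => this σ]
  rw [sum_perm_zero (fun j => if y j = a then (1:ℝ≥0∞) else 0), cnt_cast]

lemma musym_pair {n k : ℕ} (hk2 : 2 ≤ k) (h : k ≤ n + 2) (a : X) (y : Fin (n+2) → X) :
    musym h y {z | z ⟨0, by omega⟩ = a ∧ z ⟨1, by omega⟩ = a}
      = ((n+2).factorial : ℝ≥0∞)⁻¹ * ((n.factorial : ℝ≥0∞) *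
          ((cnt a y * (cnt a y - 1) : ℕ) : ℝ≥0∞)) := by
  rw [musym_apply]
  congr 1
  have h0 : Fin.castLE h ⟨0, by omega⟩ = (0 : Fin (n+2)) := rfl
  have h1 : Fin.castLE h ⟨1, by omega⟩ = (1 : Fin (n+2)) := rfl
  have : ∀ σ : Equiv.Perm (Fin (n+2)),
      ({z : Fin k → X | z ⟨0, by omega⟩ = a ∧ z ⟨1, by omega⟩ = a}).indicator
        (fun _ => (1:ℝ≥0∞)) (fun i => y (σ (Fin.castLE h i)))
      = (if y (σ 0) = a then 1 else 0) * (if y (σ 1) = a then 1 else 0) := by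
    intro σ
    rw [Set.indicator_apply]
    simp only [Set.mem_setOf_eq, h0, h1, ite_and]
    by_cases e0 : y (σ 0) = a <;> by_cases e1 : y (σ 1) = a <;> simp [e0, e1]
  rw [Finset.sum_congr rfl fun σ _ => this σ]
  rw [sum_perm_pair (fun p q => (if y p = a then (1:ℝ≥0∞) else 0) * (if y q = a then 1 else 0))]
  congr 1
  rw [Finset.sum_congr rfl fun p (_ : p ∈ (Finset.univ : Finset (Fin (n+2)))) =>
    (Finset.mul_sum (Finset.univ.erase p) (fun q => if y q = a then (1:ℝ≥0∞) else 0)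
      (if y p = a then (1:ℝ≥0∞) else 0)).symm]
  -- ∑ p, ∑ q ∈ erase p, [y p = a][y q = a] = cnt * (cnt - 1)
  have inner : ∀ p : Fin (n+2),
      (∑ q ∈ Finset.univ.erase p, if y q = a then (1:ℝ≥0∞) else 0)
        = (((Finset.univ.filter fun i => y i = a).erase p).card : ℝ≥0∞) := by
    intro p
    rw [Finset.sum_boole, Finset.filter_erase]
  calc ∑ p, (if y p = a then (1:ℝ≥0∞) else 0) * (∑ q ∈ Finset.univ.erase p,
        if y q = a then (1:ℝ≥0∞) else 0)
      = ∑ p, (if y p = a then (((Finset.univ.filter fun i => y i = a).erase p).card : ℝ≥0∞)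
          else 0) := by
        refine Finset.sum_congr rfl fun p _ => ?_
        rw [inner p]
        by_cases e : y p = a <;> simp [e]
    _ = ∑ p ∈ Finset.univ.filter (fun i => y i = a),
          (((Finset.univ.filter fun i => y i = a).erase p).card : ℝ≥0∞) := by
        rw [Finset.sum_filter]
    _ = ∑ p ∈ Finset.univ.filter (fun i => y i = a), ((cnt a y - 1 : ℕ) : ℝ≥0∞) := by
        refine Finset.sum_congr rfl fun p hp => ?_
        rw [Finset.card_erase_of_mem hp, cnt]
    _ = ((cnt a y * (cnt a y - 1) : ℕ) : ℝ≥0∞) := by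
        rw [Finset.sum_const, cnt, nsmul_eq_mul, Nat.cast_mul]

lemma nat_cast_pred_mul (m : ℕ) : ((m * (m - 1) : ℕ) : ℝ) = (m:ℝ)^2 - m := by
  cases m with
  | zero => simp
  | succ p => push_cast [Nat.succ_sub_one]; ring

lemma key_counts {n k : ℕ} (hk2 : 2 ≤ k) (h : k ≤ n + 2) (x : Fin (n+2) → X)
    (d : (Fin (n+2) → X) → ℝ≥0∞) (hd1 : ∑ y, d y = 1)
    (hrep : ∑ y, d y • musym h y = musym h x) :
    ∀ y, d y ≠ 0 → ∀ a, cnt a y = cnt a x := by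
  intro y0 hy0 a
  have hk : 0 < k := by omega
  have hdle : ∀ y, d y ≤ 1 := fun y =>
    hd1 ▸ Finset.single_le_sum (f := d) (fun _ _ => zero_le) (Finset.mem_univ y)
  have hdfin : ∀ y, d y ≠ ∞ := fun y => ne_top_of_le_ne_top one_ne_top (hdle y)
  have hCfin : ∀ m : ℕ, ((m : ℝ≥0∞))⁻¹ ≠ ∞ ∨ True := fun _ => Or.inr trivial
  -- first-moment identity
  have e1 : ∑ y, d y * (cnt a y : ℝ≥0∞) = (cnt a x : ℝ≥0∞) := by
    have hA := congrArg (fun μ : Measure (Fin k → X) => μ {z | z ⟨0, hk⟩ = a}) hrep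
    simp only [Measure.coe_finset_sum, Finset.sum_apply, Measure.smul_apply, smul_eq_mul] at hA
    rw [Finset.sum_congr rfl fun y (_ : y ∈ Finset.univ) => by
      rw [musym_first hk h a y], musym_first hk h a x] at hA
    set C : ℝ≥0∞ := (((n+2).factorial : ℝ≥0∞))⁻¹ * ((n+1).factorial : ℝ≥0∞) with hC
    have hC0 : C ≠ 0 := by
      apply mul_ne_zero
      · exact ENNReal.inv_ne_zero.2 (natCast_ne_top _)
      · exact_mod_cast (Nat.factorial_pos (n+1)).ne'
    have hCtop : C ≠ ∞ := by
      apply ENNReal.mul_ne_top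
      · exact ENNReal.inv_ne_top.2 (by exact_mod_cast (Nat.factorial_pos (n+2)).ne')
      · exact natCast_ne_top _
    rw [Finset.sum_congr rfl fun y (_ : y ∈ Finset.univ) => show
      d y * ((((n+2).factorial : ℝ≥0∞))⁻¹ * (((n+1).factorial : ℝ≥0∞) * (cnt a y : ℝ≥0∞)))
        = C * (d y * (cnt a y : ℝ≥0∞)) by rw [hC]; ring] at hA
    rw [← Finset.mul_sum, show (((n+2).factorial : ℝ≥0∞))⁻¹ *
      (((n+1).factorial : ℝ≥0∞) * (cnt a x : ℝ≥0∞)) = C * (cnt a x : ℝ≥0∞) by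
        rw [hC]; ring] at hA
    exact (ENNReal.mul_right_inj hC0 hCtop).1 hA
  -- second-moment identity
  have e2 : ∑ y, d y * ((cnt a y * (cnt a y - 1) : ℕ) : ℝ≥0∞)
      = ((cnt a x * (cnt a x - 1) : ℕ) : ℝ≥0∞) := by
    have hB := congrArg (fun μ : Measure (Fin k → X) =>
      μ {z | z ⟨0, by omega⟩ = a ∧ z ⟨1, by omega⟩ = a}) hrep
    simp only [Measure.coe_finset_sum, Finset.sum_apply, Measure.smul_apply, smul_eq_mul] at hB
    rw [Finset.sum_congr rfl fun y (_ : y ∈ Finset.univ) => by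
      rw [musym_pair hk2 h a y], musym_pair hk2 h a x] at hB
    set C : ℝ≥0∞ := (((n+2).factorial : ℝ≥0∞))⁻¹ * ((n).factorial : ℝ≥0∞) with hC
    have hC0 : C ≠ 0 := by
      apply mul_ne_zero
      · exact ENNReal.inv_ne_zero.2 (natCast_ne_top _)
      · exact_mod_cast (Nat.factorial_pos n).ne'
    have hCtop : C ≠ ∞ := by
      apply ENNReal.mul_ne_top
      · exact ENNReal.inv_ne_top.2 (by exact_mod_cast (Nat.factorial_pos (n+2)).ne')
      · exact natCast_ne_top _
    rw [Finset.sum_congr rfl fun y (_ : y ∈ Finset.univ) => show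
      d y * ((((n+2).factorial : ℝ≥0∞))⁻¹ * (((n).factorial : ℝ≥0∞) *
        ((cnt a y * (cnt a y - 1) : ℕ) : ℝ≥0∞)))
        = C * (d y * ((cnt a y * (cnt a y - 1) : ℕ) : ℝ≥0∞)) by rw [hC]; ring] at hB
    rw [← Finset.mul_sum, show (((n+2).factorial : ℝ≥0∞))⁻¹ *
      (((n).factorial : ℝ≥0∞) * ((cnt a x * (cnt a x - 1) : ℕ) : ℝ≥0∞))
        = C * ((cnt a x * (cnt a x - 1) : ℕ) : ℝ≥0∞) by rw [hC]; ring] at hB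
    exact (ENNReal.mul_right_inj hC0 hCtop).1 hB
  -- pass to real numbers
  set e : (Fin (n+2) → X) → ℝ := fun y => (d y).toReal with he
  set v : (Fin (n+2) → X) → ℝ := fun y => (cnt a y : ℝ) with hv
  have hsum1 : ∑ y, e y = 1 := by
    have := congrArg ENNReal.toReal hd1
    rwa [ENNReal.toReal_sum (fun y _ => hdfin y)] at this
  have hsum2 : ∑ y, e y * v y = v x := by
    have := congrArg ENNReal.toReal e1
    rwa [ENNReal.toReal_sum (fun y _ => ENNReal.mul_ne_top (hdfin y) (natCast_ne_top _)),
      Finset.sum_congr rfl fun y (_ : y ∈ Finset.univ) => ENNReal.toReal_mul] at this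
    -- remaining casts handled below
  have hsum3 : ∑ y, e y * (v y ^ 2 - v y) = v x ^ 2 - v x := by
    have := congrArg ENNReal.toReal e2
    rw [ENNReal.toReal_sum (fun y _ => ENNReal.mul_ne_top (hdfin y) (natCast_ne_top _))] at this
    rw [Finset.sum_congr rfl fun y (_ : y ∈ Finset.univ) => ENNReal.toReal_mul] at this
    simp only [ENNReal.toReal_natCast] at this
    rw [Finset.sum_congr rfl fun y (_ : y ∈ Finset.univ) => by
      rw [nat_cast_pred_mul (cnt a y)], nat_cast_pred_mul (cnt a x)] at this
    exact this
  have hvar : ∑ y, e y * (v y - v x) ^ 2 = 0 := by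
    have expand : ∀ y : Fin (n+2) → X, e y * (v y - v x) ^ 2
        = e y * (v y ^ 2 - v y) + (1 - 2 * v x) * (e y * v y) + v x ^ 2 * e y := by
      intro y; ring
    rw [Finset.sum_congr rfl fun y _ => expand y, Finset.sum_add_distrib,
      Finset.sum_add_distrib, ← Finset.mul_sum, ← Finset.mul_sum, hsum1, hsum2, hsum3]
    ring
  have hterm := (Finset.sum_eq_zero_iff_of_nonneg (fun y _ =>
    mul_nonneg ENNReal.toReal_nonneg (sq_nonneg _))).1 hvar y0 (Finset.mem_univ y0)
  have hepos : 0 < e y0 := ENNReal.toReal_pos hy0 (hdfin y0)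
  have : (v y0 - v x) ^ 2 = 0 := by
    rcases mul_eq_zero.1 hterm with h' | h'
    · exact absurd h' hepos.ne'
    · exact h'
  have hvv : v y0 = v x := by nlinarith [sq_nonneg (v y0 - v x)]
  simp only [hv] at hvv
  exact_mod_cast hvv

lemma exists_perm_of_cnt {N : ℕ} (x y : Fin N → X) (hc : ∀ a, cnt a y = cnt a x) :
    ∃ τ : Equiv.Perm (Fin N), ∀ i, x (τ i) = y i := by
  have hcard : ∀ a, Fintype.card {i // y i = a} = Fintype.card {i // x i = a} := by
    intro a
    rw [Fintype.card_subtype, Fintype.card_subtype]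
    exact hc a
  let E : ∀ a, {i // y i = a} ≃ {i // x i = a} := fun a => Fintype.equivOfCardEq (hcard a)
  refine ⟨(Equiv.sigmaFiberEquiv y).symm.trans
    ((Equiv.sigmaCongrRight E).trans (Equiv.sigmaFiberEquiv x)), fun i => ?_⟩
  exact (E (y i) ⟨i, rfl⟩).2

lemma musym_of_cnt_eq {k N : ℕ} (h : k ≤ N) (x y : Fin N → X)
    (hc : ∀ a, cnt a y = cnt a x) : musym h y = musym h x := by
  obtain ⟨τ, hτ⟩ := exists_perm_of_cnt x y hc
  have : (fun i => x (τ i)) = y := funext hτ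
  rw [← this, musym_perm]

lemma key_musym {n k : ℕ} (hk2 : 2 ≤ k) (h : k ≤ n + 2) (x : Fin (n+2) → X)
    (d : (Fin (n+2) → X) → ℝ≥0∞) (hd1 : ∑ y, d y = 1)
    (hrep : ∑ y, d y • musym h y = musym h x) :
    ∀ y, d y ≠ 0 → musym h y = musym h x := fun y hy =>
  musym_of_cnt_eq h x y (key_counts hk2 h x d hd1 hrep y hy)

lemma musym_extreme {n k : ℕ} (hk2 : 2 ≤ k) (h : k ≤ n + 2) (x : Fin (n+2) → X) :
    IsExtremePt (NRep (X := X) h) (musym h x) := by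
  have hN : 0 < n + 2 := by omega
  refine ⟨musym_mem_NRep h hN x, ?_⟩
  rintro μ1 h1 μ2 h2 t ht0 ht1 heq
  obtain ⟨d1, hd1s, hμ1⟩ := (mem_NRep_iff h hN μ1).1 h1
  obtain ⟨d2, hd2s, hμ2⟩ := (mem_NRep_iff h hN μ2).1 h2
  set d : (Fin (n+2) → X) → ℝ≥0∞ := fun y => t * d1 y + (1 - t) * d2 y with hd
  have hds : ∑ y, d y = 1 := by
    rw [hd]
    simp only
    rw [Finset.sum_add_distrib, ← Finset.mul_sum, ← Finset.mul_sum, hd1s, hd2s, mul_one,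
      mul_one]
    exact add_tsub_cancel_of_le ht1.le
  have hrep : ∑ y, d y • musym h y = musym h x := by
    have : ∑ y, d y • musym h y = t • μ1 + (1 - t) • μ2 := by
      rw [hμ1, hμ2, Finset.smul_sum, Finset.smul_sum, ← Finset.sum_add_distrib]
      refine Finset.sum_congr rfl fun y _ => ?_
      rw [hd]
      simp only
      rw [add_smul, mul_smul, mul_smul]
    rw [this, ← heq]
  have hkey := key_musym hk2 h x d hds hrep
  have step : ∀ (c : (Fin (n+2) → X) → ℝ≥0∞), (∑ y, c y = 1) →
      (∀ y, c y ≠ 0 → d y ≠ 0) → ∑ y, c y • musym h y = musym h x := by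
    intro c hcs hcd
    have : ∀ y : Fin (n+2) → X, c y • musym h y = c y • musym h x := by
      intro y
      by_cases hcy : c y = 0
      · rw [hcy, zero_smul, zero_smul]
      · rw [hkey y (hcd y hcy)]
    rw [Finset.sum_congr rfl fun y _ => this y, ← Finset.sum_smul, hcs, one_smul]
  constructor
  · rw [hμ1]
    rw [hμ1] at heq
    refine step d1 hd1s fun y hy => ?_
    rw [hd]
    simp only
    intro hzero
    rw [add_eq_zero] at hzero
    exact hy (by
      rcases mul_eq_zero.1 hzero.1 with h' | h'
      · exact absurd h' ht0.ne'
      · exact h')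
  · rw [hμ2]
    refine step d2 hd2s fun y hy => ?_
    rw [hd]
    simp only
    intro hzero
    rw [add_eq_zero] at hzero
    have h1t : (1 : ℝ≥0∞) - t ≠ 0 := tsub_pos_of_lt ht1 |>.ne'
    exact hy (by
      rcases mul_eq_zero.1 hzero.2 with h' | h'
      · exact absurd h' h1t
      · exact h')

lemma extreme_subset {n k : ℕ} (hk2 : 2 ≤ k) (h : k ≤ n + 2)
    (μ : Measure (Fin k → X)) (hμ : IsExtremePt (NRep (X := X) h) μ) :
    ∃ y : Fin (n+2) → X, μ = musym h y := by
  have hN : 0 < n + 2 := by omega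
  obtain ⟨hmem, hext⟩ := hμ
  obtain ⟨d, hds, hrep⟩ := (mem_NRep_iff h hN μ).1 hmem
  have : ∃ y0, d y0 ≠ 0 := by
    by_contra hc
    push_neg at hc
    rw [Finset.sum_congr rfl fun y _ => hc y] at hds
    simp at hds
  obtain ⟨y0, hy0⟩ := this
  have hdle : d y0 ≤ 1 :=
    hds ▸ Finset.single_le_sum (f := d) (fun _ _ => zero_le) (Finset.mem_univ y0)
  set t := d y0 with htdef
  have hsplit : t + ∑ y ∈ Finset.univ.erase y0, d y = 1 := by
    rw [htdef, Finset.add_sum_erase _ d (Finset.mem_univ y0)]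
    exact hds
  rcases eq_or_lt_of_le hdle with heq1 | hlt1
  · -- t = 1, all other weights vanish
    refine ⟨y0, ?_⟩
    have hrest : ∑ y ∈ Finset.univ.erase y0, d y = 0 := by
      have h2 := hsplit
      rw [heq1] at h2
      have h2' : (1:ℝ≥0∞) + ∑ y ∈ Finset.univ.erase y0, d y = 1 + 0 := by
        rw [add_zero]; exact h2
      exact (ENNReal.add_right_inj one_ne_top).1 h2'
    have hzero : ∀ y ∈ Finset.univ.erase y0, d y = 0 :=
      fun y hy => (Finset.sum_eq_zero_iff.1 hrest) y hy
    rw [hrep, ← Finset.add_sum_erase _ _ (Finset.mem_univ y0),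
      Finset.sum_congr rfl (fun y hy => by rw [hzero y hy, zero_smul]),
      Finset.sum_const_zero, add_zero, ← htdef, heq1, one_smul]
  · -- 0 < t < 1 : use extremality
    set r : ℝ≥0∞ := 1 - t with hrdef
    have hr0 : r ≠ 0 := (tsub_pos_of_lt hlt1).ne'
    have hrtop : r ≠ ∞ := by
      rw [hrdef]
      exact ne_top_of_le_ne_top one_ne_top tsub_le_self
    have hrsum : ∑ y ∈ Finset.univ.erase y0, d y = r := by
      rw [hrdef]
      exact ENNReal.eq_sub_of_add_eq (ne_top_of_le_ne_top one_ne_top hdle)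
        (by rw [add_comm]; exact hsplit)
    classical
    set d' : (Fin (n+2) → X) → ℝ≥0∞ := fun y => if y = y0 then 0 else r⁻¹ * d y with hd'
    have hd's : ∑ y, d' y = 1 := by
      rw [← Finset.add_sum_erase _ d' (Finset.mem_univ y0)]
      simp only [hd']
      simp only [if_true, zero_add]
      rw [Finset.sum_congr rfl fun y hy => if_neg (Finset.mem_erase.1 hy).1, ← Finset.mul_sum,
        hrsum]
      exact ENNReal.inv_mul_cancel hr0 hrtop
    set ν : Measure (Fin k → X) := ∑ y, d' y • musym h y with hν
    have hνmem : ν ∈ NRep (X := X) h := (mem_NRep_iff h hN ν).2 ⟨d', hd's, rfl⟩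
    have hy0mem : musym h y0 ∈ NRep (X := X) h := musym_mem_NRep h hN y0
    have hsplit2 : μ = t • musym h y0 + (1 - t) • ν := by
      rw [← hrdef, hν, Finset.smul_sum]
      have : ∀ y : Fin (n+2) → X, r • d' y • musym h y
          = (if y = y0 then (0:ℝ≥0∞) else d y) • musym h y := by
        intro y
        rw [hd']
        by_cases hyy : y = y0
        · simp [hyy]
        · simp only [if_neg hyy, smul_smul, ← mul_assoc, ENNReal.mul_inv_cancel hr0 hrtop,
            one_mul]
      rw [Finset.sum_congr rfl fun y _ => this y]
      rw [hrep, ← Finset.add_sum_erase _ (fun y => d y • musym h y) (Finset.mem_univ y0),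
        ← Finset.add_sum_erase _ (fun y => (if y = y0 then (0:ℝ≥0∞) else d y) • musym h y)
          (Finset.mem_univ y0)]
      rw [if_pos rfl, zero_smul, zero_add, ← htdef]
      congr 1
      refine Finset.sum_congr rfl fun y hy => ?_
      rw [if_neg (Finset.mem_erase.1 hy).1]
    have := hext (musym h y0) hy0mem ν hνmem t (pos_iff_ne_zero.2 hy0) hlt1 hsplit2
    exact ⟨y0, this.1.symm⟩

def msOf {N : ℕ} (y : Fin N → X) : Multiset X := Multiset.map y Finset.univ.val

lemma msOf_card {N : ℕ} (y : Fin N → X) : Multiset.card (msOf y) = N := by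
  simp [msOf]

lemma count_msOf {N : ℕ} (a : X) (y : Fin N → X) : (msOf y).count a = cnt a y := by
  rw [msOf, Multiset.count_map, cnt]
  have : Multiset.filter (fun i => a = y i) Finset.univ.val
      = (Finset.univ.filter fun i => y i = a).val := by
    rw [Finset.filter_val]
    exact Multiset.filter_congr (fun i _ => by constructor <;> exact fun h => h.symm)
  rw [this]
  rfl

lemma exists_vec {N : ℕ} (m : Multiset X) (hm : Multiset.card m = N) :
    ∃ y : Fin N → X, msOf y = m := by
  obtain ⟨l, rfl⟩ : ∃ l : List X, (l : Multiset X) = m := ⟨m.toList, Multiset.coe_toList m⟩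
  have hl : l.length = N := by simpa using hm
  subst hl
  refine ⟨l.get, ?_⟩
  rw [msOf, Fin.univ_val_map, List.ofFn_get]

lemma musym_inj_cnt {n k : ℕ} (hk2 : 2 ≤ k) (h : k ≤ n+2) (x y : Fin (n+2) → X)
    (he : musym h y = musym h x) : ∀ a, cnt a y = cnt a x := by
  classical
  have hsum : (∑ z : Fin (n+2) → X, (fun z => if z = y then (1:ℝ≥0∞) else 0) z • musym h z)
      = musym h x := by
    simp only [ite_smul, one_smul, zero_smul, Finset.sum_ite_eq', Finset.mem_univ, if_pos]
    exact he
  exact key_counts hk2 h x (fun z => if z = y then 1 else 0) (by simp) hsum y (by simp)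

end Aux

end AuxDF

/-- On a finite state space `X` with `ℓ` elements and for `2 ≤ k ≤ N`, the
convex set `𝒫_{N-rep}(X^k)` has exactly `C(N+ℓ−1, ℓ−1)` extreme points. -/
theorem card_extreme_points_finite_state
    {X : Type*} [Fintype X] [DecidableEq X] [Nonempty X]
    [MeasurableSpace X] [MeasurableSingletonClass X]
    {k N : ℕ} (hk : 2 ≤ k) (hkN : k ≤ N) :
    Set.ncard {μ : Measure (Fin k → X) | IsExtremePt (NRep (X := X) hkN) μ}
      = (N + Fintype.card X - 1).choose (Fintype.card X - 1) := by
  classical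
  obtain ⟨n, rfl⟩ : ∃ n, N = n + 2 := ⟨N - 2, by omega⟩
  have hset : {μ : Measure (Fin k → X) | IsExtremePt (NRep (X := X) hkN) μ}
      = Set.range (fun y : Fin (n+2) → X => musym hkN y) := by
    ext μ
    constructor
    · intro hμ
      obtain ⟨y, hy⟩ := extreme_subset hk hkN μ hμ
      exact ⟨y, hy.symm⟩
    · rintro ⟨y, rfl⟩
      exact musym_extreme hk hkN y
  rw [hset]
  have hvec : ∀ s : Sym X (n+2), ∃ y : Fin (n+2) → X, msOf y = s.1 :=
    fun s => exists_vec s.1 s.2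
  choose vec hvecspec using hvec
  have hrange : Set.range (fun y : Fin (n+2) → X => musym hkN y)
      = Set.range (fun s : Sym X (n+2) => musym hkN (vec s)) := by
    apply Set.Subset.antisymm
    · rintro μ ⟨y, rfl⟩
      refine ⟨⟨msOf y, msOf_card y⟩, ?_⟩
      have hc : ∀ a, cnt a (vec ⟨msOf y, msOf_card y⟩) = cnt a y := by
        intro a
        rw [← count_msOf a y, ← count_msOf a (vec ⟨msOf y, msOf_card y⟩),
          hvecspec ⟨msOf y, msOf_card y⟩]
      exact musym_of_cnt_eq hkN y _ hc
    · rintro μ ⟨s, rfl⟩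
      exact ⟨vec s, rfl⟩
  rw [hrange]
  have ginj : Function.Injective (fun s : Sym X (n+2) => musym hkN (vec s)) := by
    intro s s' hss
    have hc := musym_inj_cnt hk hkN (vec s') (vec s) hss
    apply Subtype.ext
    apply Multiset.ext.2
    intro a
    rw [← hvecspec s, ← hvecspec s', count_msOf, count_msOf]
    exact hc a
  rw [← Set.image_univ, Set.ncard_image_of_injective _ ginj, Set.ncard_univ,
    Nat.card_eq_fintype_card, Sym.card_sym_eq_choose]
  have hl : 1 ≤ Fintype.card X := Fintype.card_pos
  have h1 : Fintype.card X + (n+2) - 1 = (n+2) + Fintype.card X - 1 := by omega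
  have h2 : (n+2) + Fintype.card X - 1 - (n+2) = Fintype.card X - 1 := by omega
  rw [h1, ← h2, Nat.choose_symm (by omega)]


end FiniteDeFinetti
end
end

section
/- Let X be a Polish space, N ≥ 2, and fix (x_1,…,x_N) ∈ X^N. For k = 1,…,N let μ_k := M_k S_N δ_{(x_1,…,x_N)} and let λ := (1/N) Σ_{i=1}^N δ_{x_i}. Then for every k = 1,…,N−1 one has the recursion μ_{k+1} = (N/(N−k)) · μ_k ⊗ λ − (1/(N−k)) Σ_{j=1}^k (R_j)_# μ_k, where R_j : X^k → X^{k+1} is the map R_j(z_1,…,z_k) := (z_1,…,z_k,z_j) and (R_j)_# denotes pushforward. -/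
/-!
Write `μ_m = (1/N!) ∑_σ δ_{(x_{σ 1},…,x_{σ m})}`. Then `N · μ_k ⊗ λ` is `(1/N!) ∑_σ ∑_i` of the
Dirac mass at `(x_{σ 1},…,x_{σ k}, x_i)`. Substituting `i = σ a`, the `k` indices `a ≤ k` give
`∑_j (R_j)_# μ_k`, while for each of the `N − k` indices `a > k` precomposing `σ` with the
transposition `(a, k+1)` turns the sum into `μ_{k+1}`. Hence
`N · μ_k ⊗ λ = (N − k) μ_{k+1} + ∑_j (R_j)_# μ_k` as measures, and the recursion follows.
-/

open MeasureTheory Filter Topology ENNReal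

noncomputable section

namespace FiniteDeFinetti

variable {X : Type*}

section Combinatorics

variable {κ α M : Type*} [Fintype α] [DecidableEq α] [AddCommMonoid M]

lemma sum_perm_apply_eq_of_notMem_range (F : (κ → α) → α → M) (e : κ → α) {a b : α}
    (ha : a ∉ Set.range e) (hb : b ∉ Set.range e) :
    ∑ σ : Equiv.Perm α, F (σ ∘ e) (σ a) = ∑ σ : Equiv.Perm α, F (σ ∘ e) (σ b) := by
  rw [← Equiv.sum_comp (Equiv.mulRight (Equiv.swap a b))]
  refine Finset.sum_congr rfl fun σ _ => ?_
  have hfix : ⇑(σ * Equiv.swap a b) ∘ e = σ ∘ e := funext fun c =>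
    congrArg σ (Equiv.swap_apply_of_ne_of_ne (fun h => ha ⟨c, h⟩) (fun h => hb ⟨c, h⟩))
  change F (⇑(σ * Equiv.swap a b) ∘ e) ((σ * Equiv.swap a b) a) = _
  rw [hfix, Equiv.Perm.mul_apply, Equiv.swap_apply_left]

lemma sum_perm_sum_eq [Fintype κ] (F : (κ → α) → α → M) (e : κ ↪ α) {b : α}
    (hb : b ∉ Set.range e) :
    ∑ σ : Equiv.Perm α, ∑ a, F (σ ∘ e) a =
      ∑ c, ∑ σ : Equiv.Perm α, F (σ ∘ e) (σ (e c)) +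
        (Fintype.card α - Fintype.card κ) • ∑ σ : Equiv.Perm α, F (σ ∘ e) (σ b) := by
  have hsplit : ∀ σ : Equiv.Perm α, ∑ a, F (σ ∘ e) a =
      ∑ c, F (σ ∘ e) (σ (e c)) + ∑ a ∈ (Finset.univ.map e)ᶜ, F (σ ∘ e) (σ a) := fun σ => by
    rw [← Equiv.sum_comp σ, ← Finset.sum_compl_add_sum (Finset.univ.map e), Finset.sum_map,
      add_comm]
  have houtside : ∀ a ∈ (Finset.univ.map e)ᶜ,
      ∑ σ : Equiv.Perm α, F (σ ∘ e) (σ a) = ∑ σ : Equiv.Perm α, F (σ ∘ e) (σ b) :=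
    fun a ha => sum_perm_apply_eq_of_notMem_range F e (by simpa using ha) hb
  rw [Finset.sum_congr rfl fun σ _ => hsplit σ, Finset.sum_add_distrib]
  congr 1
  · exact Finset.sum_comm
  · rw [Finset.sum_comm, Finset.sum_congr rfl houtside, Finset.sum_const, Finset.card_compl,
      Finset.card_map, Finset.card_univ]

end Combinatorics

section Measures

variable [MeasurableSpace X]

@[fun_prop]
lemma Measurable.fin_snoc {β : Type*} [MeasurableSpace β] {k : ℕ} {f : β → Fin k → X}
    {g : β → X} (hf : Measurable f) (hg : Measurable g) :
    Measurable fun b => (Fin.snoc (f b) (g b) : Fin (k + 1) → X) := by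
  refine measurable_pi_lambda _ fun i => ?_
  induction i using Fin.lastCases with
  | last => simpa using hg
  | cast j => simpa using measurable_pi_iff.mp hf j

lemma marginal_symmetrize_dirac {k N : ℕ} (h : k ≤ N) (x : Fin N → X) :
    marginal h (symmetrize N (Measure.dirac x)) =
      (N.factorial : ℝ≥0∞)⁻¹ •
        ∑ σ : Equiv.Perm (Fin N), Measure.dirac (x ∘ σ ∘ Fin.castLE h) := by
  rw [marginal, symmetrize, Measure.map_smul, Measure.map_finset_sum
    (measurable_pi_lambda _ fun i => measurable_pi_apply _).aemeasurable]
  congr 1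
  refine Finset.sum_congr rfl fun σ _ => ?_
  rw [Measure.map_dirac' (by fun_prop), Measure.map_dirac' (by fun_prop)]
  rfl

lemma map_snoc_dirac_prod {k : ℕ} (z : Fin k → X) (ν : Measure X) [SFinite ν] :
    ((Measure.dirac z).prod ν).map (fun p => (Fin.snoc p.1 p.2 : Fin (k + 1) → X)) =
      ν.map (fun y => Fin.snoc z y) := by
  rw [Measure.dirac_prod, Measure.map_map (by fun_prop) (by fun_prop)]
  rfl

lemma nsmul_map_empirical {Y : Type*} [MeasurableSpace Y] {N : ℕ} (x : Fin N → X) {f : X → Y}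
    (hf : Measurable f) :
    N • (empirical N x).map f = ∑ i, Measure.dirac (f (x i)) := by
  rcases N.eq_zero_or_pos with rfl | hN
  · simp
  rw [empirical, Measure.map_smul, Measure.map_finset_sum hf.aemeasurable, ← smul_assoc,
    nsmul_eq_mul, ENNReal.mul_inv_cancel (by exact_mod_cast hN.ne') (ENNReal.natCast_ne_top N),
    one_smul]
  exact Finset.sum_congr rfl fun i _ => Measure.map_dirac' hf _

instance {N : ℕ} (γ : Measure (Fin N → X)) [IsFiniteMeasure γ] :
    IsFiniteMeasure (symmetrize N γ) :=
  Measure.smul_finite _ (by simp [Nat.factorial_ne_zero])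

instance {k N : ℕ} (h : k ≤ N) (γ : Measure (Fin N → X)) [IsFiniteMeasure γ] :
    IsFiniteMeasure (marginal h γ) := by
  rw [marginal]
  infer_instance

lemma nsmul_map_snoc_marginal_prod_empirical {k N : ℕ} (hkN : k < N) (x : Fin N → X) :
    N • ((marginal hkN.le (symmetrize N (Measure.dirac x))).prod (empirical N x)).map
        (fun p => (Fin.snoc p.1 p.2 : Fin (k + 1) → X)) =
      (N - k) • marginal hkN (symmetrize N (Measure.dirac x)) +
        ∑ j : Fin k, (marginal hkN.le (symmetrize N (Measure.dirac x))).map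
          (fun z => (Fin.snoc z (z j) : Fin (k + 1) → X)) := by
  have := empirical_isProbabilityMeasure (by omega : 0 < N) x
  set c := (N.factorial : ℝ≥0∞)⁻¹
  have hP : N • ((marginal hkN.le (symmetrize N (Measure.dirac x))).prod (empirical N x)).map
        (fun p => (Fin.snoc p.1 p.2 : Fin (k + 1) → X)) =
      c • ∑ σ : Equiv.Perm (Fin N), ∑ i,
        Measure.dirac (Fin.snoc (x ∘ σ ∘ Fin.castLE hkN.le) (x i) : Fin (k + 1) → X) := by
    rw [marginal_symmetrize_dirac, Measure.prod_smul_left, Measure.map_smul, smul_comm,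
      ← Measure.sum_fintype, Measure.prod_sum_left, Measure.map_sum (by fun_prop),
      Measure.sum_fintype, Finset.smul_sum]
    congr 1
    refine Finset.sum_congr rfl fun σ _ => ?_
    rw [map_snoc_dirac_prod, nsmul_map_empirical _ (by fun_prop)]
  have hR : ∀ j : Fin k, (marginal hkN.le (symmetrize N (Measure.dirac x))).map
        (fun z => (Fin.snoc z (z j) : Fin (k + 1) → X)) =
      c • ∑ σ : Equiv.Perm (Fin N), Measure.dirac
        (Fin.snoc (x ∘ σ ∘ Fin.castLE hkN.le) (x (σ (Fin.castLE hkN.le j))) : Fin (k + 1) → X) :=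
    fun j => by
      rw [marginal_symmetrize_dirac, Measure.map_smul, Measure.map_finset_sum (by fun_prop)]
      congr 1
      exact Finset.sum_congr rfl fun σ _ => Measure.map_dirac' (by fun_prop) _
  have hM : marginal hkN (symmetrize N (Measure.dirac x)) =
      c • ∑ σ : Equiv.Perm (Fin N), Measure.dirac
        (Fin.snoc (x ∘ σ ∘ Fin.castLE hkN.le) (x (σ ⟨k, hkN⟩)) : Fin (k + 1) → X) := by
    rw [marginal_symmetrize_dirac]
    congr 1
    exact Finset.sum_congr rfl fun σ _ => congrArg _ (Fin.snoc_init_self _).symm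
  have hcount := sum_perm_sum_eq
    (fun z a => Measure.dirac (Fin.snoc (x ∘ z) (x a) : Fin (k + 1) → X))
    (Fin.castLEEmb hkN.le) (b := ⟨k, hkN⟩) (by simp)
  simp only [Fintype.card_fin] at hcount
  rw [hP, hM, Finset.sum_congr rfl fun j _ => hR j, ← Finset.smul_sum, smul_comm, ← smul_add]
  exact congrArg (c • ·) (hcount.trans (add_comm _ _))

end Measures

theorem marginal_recursion_general
    {X : Type*} [MeasurableSpace X]
    {N : ℕ} (x : Fin N → X) {k : ℕ} (hkN : k < N) :
    ∀ A : Set (Fin (k + 1) → X), MeasurableSet A →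
      ((marginal (X := X) (show k + 1 ≤ N from hkN) (symmetrize N (Measure.dirac x))) A).toReal
        = (N : ℝ) / ((N : ℝ) - (k : ℝ)) *
            ((((marginal (X := X) hkN.le (symmetrize N (Measure.dirac x))).prod
                (empirical N x)).map (fun p => Fin.snoc p.1 p.2)) A).toReal
          - ((N : ℝ) - (k : ℝ))⁻¹ *
            ∑ j : Fin k, (((marginal (X := X) hkN.le
                (symmetrize N (Measure.dirac x))).map
                  (fun z => Fin.snoc z (z j))) A).toReal := by
  intro A _
  have hmass := congrArg (fun μ => (μ A).toReal) (nsmul_map_snoc_marginal_prod_empirical hkN x)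
  simp only [Measure.add_apply, Measure.smul_apply, Measure.finsetSum_apply, nsmul_eq_mul]
    at hmass
  rw [ENNReal.toReal_add (by finiteness) (ENNReal.sum_ne_top.2 fun _ _ => measure_ne_top _ _),
    ENNReal.toReal_sum fun _ _ => measure_ne_top _ _, ENNReal.toReal_mul, ENNReal.toReal_mul,
    ENNReal.toReal_natCast, ENNReal.toReal_natCast, Nat.cast_sub hkN.le] at hmass
  have hNk : (N : ℝ) - k ≠ 0 := sub_ne_zero.2 (by exact_mod_cast hkN.ne')
  field_simp
  linarith

/-- Recursion for the marginals `μ_k = M_k S_N δ_{(x_1,…,x_N)}`: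
`μ_{k+1} = (N/(N−k)) μ_k ⊗ λ − (1/(N−k)) ∑_{j=1}^k (R_j)_# μ_k` with
`λ = (1/N) ∑ δ_{x_i}` and `R_j(z_1,…,z_k) = (z_1,…,z_k,z_j)`; the identity of signed
measures is tested on all Borel sets. -/
theorem marginal_recursion
    {X : Type*} [MeasurableSpace X] [TopologicalSpace X] [PolishSpace X] [BorelSpace X]
    {N : ℕ} (hN : 2 ≤ N) (x : Fin N → X) {k : ℕ} (hk1 : 1 ≤ k) (hkN : k < N) :
    ∀ A : Set (Fin (k + 1) → X), MeasurableSet A →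
      ((marginal (X := X) (show k + 1 ≤ N from hkN) (symmetrize N (Measure.dirac x))) A).toReal
        = (N : ℝ) / ((N : ℝ) - (k : ℝ)) *
            ((((marginal (X := X) hkN.le (symmetrize N (Measure.dirac x))).prod
                (empirical N x)).map (fun p => Fin.snoc p.1 p.2)) A).toReal
          - ((N : ℝ) - (k : ℝ))⁻¹ *
            ∑ j : Fin k, (((marginal (X := X) hkN.le
                (symmetrize N (Measure.dirac x))).map
                  (fun z => Fin.snoc z (z j))) A).toReal :=
  marginal_recursion_general x hkN

end FiniteDeFinetti
end
end

section
/- Let X be a Polish space and N ≥ k ≥ 2. A measure μ_k ∈ 𝒫(X^k) is N-representable if and only if there exists a Borel probability measure α on 𝒫(X) (with its narrow topology) with α(𝒫_{1/N}(X)) = 1 such that for every bounded continuous φ : X^k → ℝ one has ∫_{X^k} φ dμ_k = ∫_{𝒫_{1/N}(X)} ( ∫_{X^k} φ d(F_{N,k}(λ)) ) dα(λ). -/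
open MeasureTheory Filter Topology ENNReal

noncomputable section

namespace FiniteDeFinetti

variable {X : Type*}

/-!
An `N`-representable `μ_k` is the `k`-marginal of a symmetric `γ`, and averaging over
permutations gives `∫ φ dμ_k = ∫ ψ̄_φ dγ` with `ψ̄_φ(x) = (1/N!) ∑_σ φ(x_{σ 1}, …, x_{σ k})`.
This equals `∫ φ dF_{N,k}(Λ x)`, so it only depends on the empirical measure `Λ x`, and
`α := Λ_# γ` works. Conversely, `Λ` is injective and continuous on the Borel set of tuples sorted
along a Borel embedding `X → ℝ`, so by Lusin–Souslin it has a Borel section `s` over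
`𝒫_{1/N}(X)`, and the symmetrization of `s_# α` has `k`-marginal `μ_k`.
-/

open Finset
open scoped BoundedContinuousFunction

instance {Y : Type*} [MeasurableSpace Y] [TopologicalSpace Y] [OpensMeasurableSpace Y] :
    BorelSpace (ProbabilityMeasure Y) :=
  ⟨rfl⟩

variable {k N : ℕ}

lemma exists_perm_comp_eq_of_card_fiber_eq {ι α : Type*} [Fintype ι] [DecidableEq α]
    {x y : ι → α} (h : ∀ a, #{i | x i = a} = #{i | y i = a}) :
    ∃ σ : Equiv.Perm ι, x = y ∘ σ := by
  have e : ∀ a, {i // x i = a} ≃ {i // y i = a} := fun a =>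
    Fintype.equivOfCardEq (by simpa only [Fintype.card_subtype] using h a)
  exact ⟨Equiv.ofFiberEquiv e, funext fun i => (Equiv.ofFiberEquiv_map e i).symm⟩

section Empirical

variable [MeasurableSpace X]

lemma empirical_comp_perm (x : Fin N → X) (σ : Equiv.Perm (Fin N)) :
    empirical N (x ∘ σ) = empirical N x := by
  rw [empirical, empirical, Function.comp_def, Equiv.sum_comp σ fun i => Measure.dirac (x i)]

lemma empirical_singleton [MeasurableSingletonClass X] [DecidableEq X] (x : Fin N → X) (a : X) :
    empirical N x {a} = (N : ℝ≥0∞)⁻¹ * #{i | x i = a} := by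
  simp [empirical, Set.indicator, Finset.sum_boole]

lemma exists_perm_of_empirical_eq [MeasurableSingletonClass X] {x y : Fin N → X}
    (h : empirical N x = empirical N y) : ∃ σ : Equiv.Perm (Fin N), x = y ∘ σ := by
  classical
  rcases N.eq_zero_or_pos with rfl | hN
  · exact ⟨1, Subsingleton.elim _ _⟩
  refine exists_perm_comp_eq_of_card_fiber_eq fun a => ?_
  have h_a : empirical N x {a} = empirical N y {a} := by rw [h]
  rw [empirical_singleton, empirical_singleton] at h_a
  exact_mod_cast (ENNReal.mul_right_inj (by simp) (by simpa using hN.ne')).1 h_a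

end Empirical

def symmAverage (hkN : k ≤ N) (φ : (Fin k → X) → ℝ) (x : Fin N → X) : ℝ :=
  (N.factorial : ℝ)⁻¹ * ∑ σ : Equiv.Perm (Fin N), φ fun i => x (σ (Fin.castLE hkN i))

lemma symmAverage_comp_perm (hkN : k ≤ N) (φ : (Fin k → X) → ℝ) (x : Fin N → X)
    (τ : Equiv.Perm (Fin N)) : symmAverage hkN φ (x ∘ τ) = symmAverage hkN φ x := by
  rw [symmAverage, symmAverage]
  congr 1
  exact Equiv.sum_comp (Equiv.mulLeft τ) fun σ => φ fun i => x (σ (Fin.castLE hkN i))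

section Symmetrization

variable [MeasurableSpace X]

lemma measurable_permute (σ : Equiv.Perm (Fin N)) :
    Measurable fun x : Fin N → X => fun i => x (σ i) := by
  fun_prop

lemma isProbabilityMeasure_marginal (hkN : k ≤ N) (γ : Measure (Fin N → X))
    [IsProbabilityMeasure γ] : IsProbabilityMeasure (marginal hkN γ) :=
  Measure.isProbabilityMeasure_map (by fun_prop :
    Measurable fun (x : Fin N → X) (i : Fin k) => x (Fin.castLE hkN i)).aemeasurable

lemma isProbabilityMeasure_symmetrize (γ : Measure (Fin N → X)) [IsProbabilityMeasure γ] :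
    IsProbabilityMeasure (symmetrize N γ) := by
  have := fun σ : Equiv.Perm (Fin N) =>
    Measure.isProbabilityMeasure_map (μ := γ) (measurable_permute (X := X) σ).aemeasurable
  constructor
  simp [symmetrize, Fintype.card_perm, ENNReal.inv_mul_cancel, Nat.factorial_ne_zero]

lemma symmetrize_map_permute (γ : Measure (Fin N → X)) (τ : Equiv.Perm (Fin N)) :
    (symmetrize N γ).map (fun x i => x (τ i)) = symmetrize N γ := by
  rw [symmetrize, Measure.map_smul, Measure.map_finset_sum' (measurable_permute τ).aemeasurable]
  congr 1
  simp_rw [Measure.map_map (measurable_permute τ) (measurable_permute _)]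
  exact Equiv.sum_comp (Equiv.mulRight τ) fun σ => γ.map fun x i => x (σ i)

lemma symmetrize_symmetrize (γ : Measure (Fin N → X)) :
    symmetrize N (symmetrize N γ) = symmetrize N γ := by
  conv_lhs => rw [symmetrize]
  simp_rw [symmetrize_map_permute, Finset.sum_const, Finset.card_univ, Fintype.card_perm,
    Fintype.card_fin, ← Nat.cast_smul_eq_nsmul ℝ≥0∞, smul_smul]
  rw [ENNReal.inv_mul_cancel (by simp [Nat.factorial_ne_zero]) (by simp), one_smul]

lemma measurable_symmAverage (hkN : k ≤ N) {φ : (Fin k → X) → ℝ} (hφ : Measurable φ) :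
    Measurable (symmAverage hkN φ) := by
  unfold symmAverage
  fun_prop

lemma integral_marginal_symmetrize [TopologicalSpace X] [SecondCountableTopology X]
    [OpensMeasurableSpace X] (hkN : k ≤ N) (γ : Measure (Fin N → X)) [IsFiniteMeasure γ]
    (φ : (Fin k → X) →ᵇ ℝ) :
    ∫ y, φ y ∂(marginal hkN (symmetrize N γ)) = ∫ x, symmAverage hkN φ x ∂γ := by
  have hproj : Measurable fun (x : Fin N → X) (i : Fin k) => x (Fin.castLE hkN i) := by fun_prop
  have hint : ∀ σ : Equiv.Perm (Fin N),
      Integrable (fun x => φ fun i => x (σ (Fin.castLE hkN i))) γ :=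
    fun σ => (φ.compContinuous ⟨fun (x : Fin N → X) i => x (σ (Fin.castLE hkN i)),
      by fun_prop⟩).integrable γ
  have hφ : Measurable fun x : Fin N → X => φ fun i => x (Fin.castLE hkN i) :=
    φ.continuous.measurable.comp hproj
  rw [marginal, integral_map hproj.aemeasurable φ.continuous.aestronglyMeasurable, symmetrize,
    integral_smul_measure, integral_finsetSum_measure fun σ _ => ?_]
  · rw [Finset.sum_congr rfl fun σ _ => integral_map (measurable_permute σ).aemeasurable
      hφ.aestronglyMeasurable]
    unfold symmAverage
    rw [integral_const_mul, integral_finsetSum _ fun σ _ => hint σ]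
    simp [ENNReal.toReal_inv]
  · exact (integrable_map_measure hφ.aestronglyMeasurable
      (measurable_permute σ).aemeasurable).2 (hint σ)

lemma integral_FNk_of_eq_empirical [TopologicalSpace X] [SecondCountableTopology X]
    [OpensMeasurableSpace X] [MeasurableSingletonClass X] (hkN : k ≤ N)
    {lam : ProbabilityMeasure X} {x : Fin N → X}
    (hx : (lam : Measure X) = empirical N x) (φ : (Fin k → X) →ᵇ ℝ) :
    ∫ y, φ y ∂(FNk hkN lam) = symmAverage hkN φ x := by
  have hex : ∃ z : Fin N → X, (lam : Measure X) = empirical N z := ⟨x, hx⟩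
  obtain ⟨σ, hσ⟩ := exists_perm_of_empirical_eq (hx.symm.trans hex.choose_spec)
  rw [FNk, dif_pos hex, integral_marginal_symmetrize, integral_dirac, hσ, symmAverage_comp_perm]

end Symmetrization

section Quantized

variable [MeasurableSpace X] [TopologicalSpace X]

lemma integral_empirical [OpensMeasurableSpace X] (x : Fin N → X) (f : X →ᵇ ℝ) :
    ∫ y, f y ∂(empirical N x) = (N : ℝ)⁻¹ * ∑ i, f (x i) := by
  rw [empirical, integral_smul_measure, integral_finsetSum_measure fun i _ => f.integrable _]
  simp [integral_dirac' _ _ f.continuous.stronglyMeasurable, ENNReal.toReal_inv]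

lemma continuous_empPM [OpensMeasurableSpace X] (hN : 0 < N) :
    Continuous (empPM (X := X) hN) := by
  refine continuous_iff_continuousAt.2 fun x => ?_
  refine ProbabilityMeasure.tendsto_iff_forall_integral_tendsto.2 fun f => ?_
  simp only [empPM, ProbabilityMeasure.coe_mk, integral_empirical]
  exact (by fun_prop : Continuous fun x : Fin N → X => (N : ℝ)⁻¹ * ∑ i, f (x i)).continuousAt

variable [PolishSpace X] [BorelSpace X]

variable (X N) in
def sortedTuples : Set (Fin N → X) :=
  {x | Monotone (embeddingReal X ∘ x)}

lemma measurableSet_sortedTuples : MeasurableSet (sortedTuples X N) := by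
  simp only [sortedTuples, Monotone, Set.ofPred_forall]
  exact .iInter fun a => .iInter fun b => .iInter fun _ =>
    measurableSet_le (by fun_prop) (by fun_prop)

lemma comp_sort_mem_sortedTuples (x : Fin N → X) :
    x ∘ Tuple.sort (embeddingReal X ∘ x) ∈ sortedTuples X N :=
  Tuple.monotone_sort (embeddingReal X ∘ x)

lemma injOn_empPM_sortedTuples (hN : 0 < N) :
    Set.InjOn (empPM (X := X) hN) (sortedTuples X N) := by
  intro x hx y hy hxy
  obtain ⟨σ, rfl⟩ := exists_perm_of_empirical_eq (congrArg Subtype.val hxy)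
  have hx' : Monotone ((embeddingReal X ∘ y) ∘ σ) := hx
  have hy' : Monotone ((embeddingReal X ∘ y) ∘ (1 : Equiv.Perm (Fin N))) := hy
  exact (measurableEmbedding_embeddingReal X).injective.comp_left (Tuple.unique_monotone hx' hy')

lemma measurableEmbedding_empPM_sortedTuples (hN : 0 < N) :
    MeasurableEmbedding ((sortedTuples X N).domRestrict (empPM hN)) :=
  (continuous_empPM hN).continuousOn.measurableEmbedding measurableSet_sortedTuples
    (injOn_empPM_sortedTuples hN)

lemma range_empPM_sortedTuples (hN : 0 < N) :
    Set.range ((sortedTuples X N).domRestrict (empPM hN)) = QuantizedPM N := by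
  ext lam
  constructor
  · rintro ⟨x, rfl⟩
    exact ⟨x, rfl⟩
  · rintro ⟨x, hx⟩
    refine ⟨⟨_, comp_sort_mem_sortedTuples x⟩, Subtype.ext ?_⟩
    exact (empirical_comp_perm x _).trans hx.symm

lemma measurableSet_quantizedPM (hN : 0 < N) : MeasurableSet (QuantizedPM (X := X) N) :=
  range_empPM_sortedTuples (X := X) hN ▸
    (measurableEmbedding_empPM_sortedTuples hN).measurableSet_range

lemma exists_measurable_section_empirical [Nonempty X] (hN : 0 < N) :
    ∃ s : ProbabilityMeasure X → Fin N → X, Measurable s ∧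
      ∀ lam ∈ QuantizedPM N, (lam : Measure X) = empirical N (s lam) := by
  obtain ⟨s, hs, hs_comp⟩ := (measurableEmbedding_empPM_sortedTuples hN).exists_measurable_extend
    measurable_subtype_coe fun _ => (inferInstance : Nonempty (Fin N → X))
  refine ⟨s, hs, fun lam hlam => ?_⟩
  rw [← range_empPM_sortedTuples hN] at hlam
  obtain ⟨x, rfl⟩ := hlam
  have hsx : s (empPM hN x) = x := congrFun hs_comp x
  simp only [Set.domRestrict_apply, hsx]
  rfl

lemma integral_integral_FNk_eq_integral_map (hkN : k ≤ N) (hN : 0 < N)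
    {s : ProbabilityMeasure X → Fin N → X} (hs : Measurable s)
    (hs_empirical : ∀ lam ∈ QuantizedPM N, (lam : Measure X) = empirical N (s lam))
    {α : Measure (ProbabilityMeasure X)} [IsProbabilityMeasure α] (hα : α (QuantizedPM N) = 1)
    (φ : (Fin k → X) →ᵇ ℝ) :
    ∫ lam, ∫ y, φ y ∂(FNk hkN lam) ∂α = ∫ x, symmAverage hkN φ x ∂(α.map s) := by
  have hα_ae : ∀ᵐ lam ∂α, lam ∈ QuantizedPM N :=
    (ae_mem_iff_measure_eq (measurableSet_quantizedPM hN).nullMeasurableSet).2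
      (by rw [hα, measure_univ])
  rw [integral_map hs.aemeasurable
    (measurable_symmAverage hkN φ.continuous.measurable).aestronglyMeasurable]
  exact integral_congr_ae (hα_ae.mono fun lam hlam =>
    integral_FNk_of_eq_empirical hkN (hs_empirical lam hlam) φ)

end Quantized

lemma exists_deFinetti_of_mem_NRep [MeasurableSpace X] [TopologicalSpace X] [PolishSpace X]
    [BorelSpace X] [Nonempty X] (hkN : k ≤ N) (hN : 0 < N) {μk : Measure (Fin k → X)}
    (h : μk ∈ NRep hkN) :
    ∃ α : Measure (ProbabilityMeasure X), IsProbabilityMeasure α ∧ α (QuantizedPM N) = 1 ∧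
      ∀ φ : (Fin k → X) →ᵇ ℝ, ∫ y, φ y ∂μk = ∫ lam, ∫ y, φ y ∂(FNk hkN lam) ∂α := by
  obtain ⟨γ, ⟨hγ, hγ_symm⟩, rfl⟩ := h
  obtain ⟨s, hs, hs_empirical⟩ := exists_measurable_section_empirical (X := X) hN
  have hΛ : Measurable (empPM (X := X) hN) := (continuous_empPM hN).measurable
  have hα : IsProbabilityMeasure (γ.map (empPM hN)) :=
    Measure.isProbabilityMeasure_map hΛ.aemeasurable
  have hα_quantized : γ.map (empPM hN) (QuantizedPM N) = 1 := by
    have h_univ : empPM (X := X) hN ⁻¹' QuantizedPM N = Set.univ :=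
      Set.eq_univ_of_forall fun x => ⟨x, rfl⟩
    rw [Measure.map_apply hΛ (measurableSet_quantizedPM hN), h_univ, measure_univ]
  refine ⟨γ.map (empPM hN), hα, hα_quantized, fun φ => ?_⟩
  conv_lhs => rw [hγ_symm, integral_marginal_symmetrize]
  rw [integral_integral_FNk_eq_integral_map hkN hN hs hs_empirical hα_quantized,
    Measure.map_map hs hΛ, integral_map (hs.comp hΛ).aemeasurable
      (measurable_symmAverage hkN φ.continuous.measurable).aestronglyMeasurable]
  refine integral_congr_ae (ae_of_all _ fun x => ?_)
  obtain ⟨σ, hσ⟩ := exists_perm_of_empirical_eq (hs_empirical (empPM hN x) ⟨x, rfl⟩)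
  exact (congrArg (symmAverage hkN φ) hσ).trans (symmAverage_comp_perm hkN φ _ σ)

lemma mem_NRep_of_deFinetti [MeasurableSpace X] [TopologicalSpace X] [PolishSpace X]
    [BorelSpace X] [Nonempty X] (hkN : k ≤ N) (hN : 0 < N) {μk : Measure (Fin k → X)}
    [IsProbabilityMeasure μk] {α : Measure (ProbabilityMeasure X)} [IsProbabilityMeasure α]
    (hα : α (QuantizedPM N) = 1)
    (h : ∀ φ : (Fin k → X) →ᵇ ℝ, ∫ y, φ y ∂μk = ∫ lam, ∫ y, φ y ∂(FNk hkN lam) ∂α) :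
    μk ∈ NRep hkN := by
  obtain ⟨s, hs, hs_empirical⟩ := exists_measurable_section_empirical (X := X) hN
  have : IsProbabilityMeasure (α.map s) := Measure.isProbabilityMeasure_map hs.aemeasurable
  have : IsProbabilityMeasure (symmetrize N (α.map s)) := isProbabilityMeasure_symmetrize _
  refine ⟨symmetrize N (α.map s), ⟨inferInstance, (symmetrize_symmetrize _).symm⟩, ?_⟩
  have : IsProbabilityMeasure (marginal hkN (symmetrize N (α.map s))) :=
    isProbabilityMeasure_marginal hkN _
  refine ext_of_forall_integral_eq_of_IsFiniteMeasure fun φ => ?_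
  rw [h φ, integral_integral_FNk_eq_integral_map hkN hN hs hs_empirical hα,
    integral_marginal_symmetrize]

/-- de Finetti style representation. For a Polish space `X` and
`N ≥ k ≥ 2`, a probability measure `μ_k` on `X^k` is `N`-representable iff there is a Borel
probability measure `α` on `𝒫(X)` giving full mass to `𝒫_{1/N}(X)` such that
`∫ φ dμ_k = ∫_{𝒫_{1/N}(X)} (∫ φ dF_{N,k}(λ)) dα(λ)` for every bounded continuous `φ`. -/
theorem nrep_iff_deFinetti_representation
    {X : Type*} [MeasurableSpace X] [TopologicalSpace X] [PolishSpace X] [BorelSpace X]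
    {k N : ℕ} (hk : 2 ≤ k) (hkN : k ≤ N)
    (μk : Measure (Fin k → X)) (hμk : IsProbabilityMeasure μk) :
    μk ∈ NRep (X := X) hkN ↔
      ∃ α : Measure (ProbabilityMeasure X), IsProbabilityMeasure α ∧
        α (QuantizedPM (X := X) N) = 1 ∧
        ∀ φ : BoundedContinuousFunction (Fin k → X) ℝ,
          ∫ y, φ y ∂μk = ∫ lam, (∫ y, φ y ∂(FNk (X := X) hkN lam)) ∂α := by
  have hN : 0 < N := by omega
  have : Nonempty X := ⟨(nonempty_of_isProbabilityMeasure μk).some ⟨0, by omega⟩⟩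
  exact ⟨exists_deFinetti_of_mem_NRep hkN hN,
    fun ⟨α, _, hα, h⟩ => mem_NRep_of_deFinetti hkN hN hα h⟩

end FiniteDeFinetti
end
end
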